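/- arXiv:1307.5764 — 9 statements merged into one kernel-verified Lean document; each statement's English description precedes it below -/
import Mathlib

section
/- Let n ≥ 1 and let M̂ ⊆ S^{n+1} be a weakly convex body in the closed hemisphere ℋ(x₀) for some x₀ ∈ S^{n+1}. Suppose that M̂ satisfies an interior sphere condition with respect to x₀ at every point p ∈ M̂ ∩ 𝒮(x₀). Then M̂ is a convex body in a hemisphere: there exists x ∈ S^{n+1} with M̂ ⊆ ℋ(x) such that for all p, q ∈ M̂, every minimizing geodesic segment from p to q that is contained in ℋ(x) is contained in M̂. -/
open scoped RealInnerProductSpace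

noncomputable section

/-- Euclidean space `ℝ^{n+2}`. -/
abbrev Eucl (n : ℕ) : Type := EuclideanSpace ℝ (Fin (n + 2))

/-- The unit sphere `S^{n+1} ⊆ ℝ^{n+2}`, as a subtype with the subspace topology. -/
abbrev Sphere (n : ℕ) : Type := Metric.sphere (0 : Eucl n) 1

/-- The closed hemisphere centered at `x`. -/
def hemi {n : ℕ} (x : Sphere n) : Set (Sphere n) :=
  {p : Sphere n | 0 ≤ ⟪(p : Eucl n), (x : Eucl n)⟫}

/-- The open hemisphere centered at `x` (the interior of `hemi x`). -/
def openHemi {n : ℕ} (x : Sphere n) : Set (Sphere n) :=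
  {p : Sphere n | 0 < ⟪(p : Eucl n), (x : Eucl n)⟫}

/-- The equator `𝒮(x)`. -/
def equator {n : ℕ} (x : Sphere n) : Set (Sphere n) :=
  {p : Sphere n | ⟪(p : Eucl n), (x : Eucl n)⟫ = 0}

/-- `Γ` is a minimizing geodesic segment from `p` to `q` in the sphere. -/
def IsMinGeodesicSegment {n : ℕ} (p q : Sphere n) (Γ : Set (Sphere n)) : Prop :=
  ∃ v : Eucl n, ‖v‖ = 1 ∧ ⟪v, (p : Eucl n)⟫ = 0 ∧
    Real.cos (Real.arccos ⟪(p : Eucl n), (q : Eucl n)⟫) • (p : Eucl n) +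
      Real.sin (Real.arccos ⟪(p : Eucl n), (q : Eucl n)⟫) • v = (q : Eucl n) ∧
    Γ = {z : Sphere n | ∃ t ∈ Set.Icc (0 : ℝ) (Real.arccos ⟪(p : Eucl n), (q : Eucl n)⟫),
      (z : Eucl n) = Real.cos t • (p : Eucl n) + Real.sin t • v}

/-- A set is weakly convex if any two of its points are joined by some
minimizing geodesic segment contained in the set. -/
def WeaklyConvexSet {n : ℕ} (M : Set (Sphere n)) : Prop :=
  ∀ p ∈ M, ∀ q ∈ M, ∃ Γ : Set (Sphere n), IsMinGeodesicSegment p q Γ ∧ Γ ⊆ M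

/-- A set is convex if every minimizing geodesic segment joining two of its points
is contained in the set. -/
def SphConvexSet {n : ℕ} (M : Set (Sphere n)) : Prop :=
  ∀ p ∈ M, ∀ q ∈ M, ∀ Γ : Set (Sphere n), IsMinGeodesicSegment p q Γ → Γ ⊆ M

/-- Stereographic projection sending `x₀` to `0 ∈ x₀^⊥`. -/
def stereo {n : ℕ} (x₀ : Sphere n) (p : Sphere n) : Eucl n :=
  (2 / (1 + ⟪(p : Eucl n), (x₀ : Eucl n)⟫)) •
    ((p : Eucl n) - ⟪(p : Eucl n), (x₀ : Eucl n)⟫ • (x₀ : Eucl n))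

/-- `A` satisfies an interior sphere condition at `p` with respect to `x₀`:
there is a ball (of the hyperplane `x₀^⊥`) inside `stereo x₀ '' A` touching `stereo x₀ p`. -/
def IntSphereCond {n : ℕ} (x₀ : Sphere n) (A : Set (Sphere n)) (p : Sphere n) : Prop :=
  ∃ c : Eucl n, ⟪c, (x₀ : Eucl n)⟫ = 0 ∧ ∃ ρ : ℝ, 0 < ρ ∧
    {y : Eucl n | ⟪y, (x₀ : Eucl n)⟫ = 0 ∧ dist y c < ρ} ⊆ stereo x₀ '' A ∧
    ‖stereo x₀ p - c‖ = ρ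


/-! If `M` has no antipodal pair, minimizing segments between points of `M` are unique, so weak
convexity already gives convexity. If `p, -p ∈ M`, both lie on the equator `𝒮(x₀)`, and the
interior sphere condition at `p` gives a ball of radius `ρ` in `stereo x₀ '' M`; since
`stereo x₀ '' ℋ(x₀)` lies in the ball of radius 2 which the first ball touches at `2p`, its
centre is `(2 - ρ) p`. Each half great circle from `p` to `-p` entering the open hemisphere meets that ball
at some `q₀ ∈ M` close to `p`, and the unique segments from `p` to `q₀` and from `q₀` to `-p` lie
in `M` and cover the half circle. These half circles sweep out the open hemisphere, so `M`, being
closed, is all of `ℋ(x₀)`. -/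

open Real Topology

section GreatCircle

variable {E : Type*} [NormedAddCommGroup E] [InnerProductSpace ℝ E]

def greatCircle (p v : E) (t : ℝ) : E := cos t • p + sin t • v

@[simp] lemma greatCircle_zero (p v : E) : greatCircle p v 0 = p := by
  simp [greatCircle]

lemma greatCircle_pi (p v : E) : greatCircle p v π = -p := by
  simp [greatCircle]

lemma greatCircle_add (p v : E) (a t : ℝ) :
    greatCircle p v (a + t) =
      cos t • greatCircle p v a + sin t • greatCircle p v (a + π / 2) := by
  simp only [greatCircle]
  rw [cos_add_pi_div_two, sin_add_pi_div_two, cos_add, sin_add]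
  module

variable {p v : E}

lemma inner_greatCircle (hp : ‖p‖ = 1) (hv : ‖v‖ = 1) (hvp : ⟪v, p⟫ = 0) (a b : ℝ) :
    ⟪greatCircle p v a, greatCircle p v b⟫ = cos (b - a) := by
  have hpv : ⟪p, v⟫ = 0 := by rw [real_inner_comm, hvp]
  simp only [greatCircle, inner_add_left, inner_add_right, real_inner_smul_left,
    real_inner_smul_right, real_inner_self_eq_norm_sq, hp, hv, hvp, hpv, cos_sub]
  ring

lemma norm_greatCircle (hp : ‖p‖ = 1) (hv : ‖v‖ = 1) (hvp : ⟪v, p⟫ = 0) (t : ℝ) :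
    ‖greatCircle p v t‖ = 1 := by
  have h := inner_greatCircle hp hv hvp t t
  rw [sub_self, cos_zero, real_inner_self_eq_norm_sq] at h
  exact (pow_eq_one_iff_of_nonneg (norm_nonneg _) two_ne_zero).1 h

lemma exists_eq_greatCircle_arccos {w : E} (hp : ‖p‖ = 1) (hw : ‖w‖ = 1)
    (h₁ : -1 < ⟪p, w⟫) (h₂ : ⟪p, w⟫ < 1) :
    ∃ v : E, ‖v‖ = 1 ∧ ⟪v, p⟫ = 0 ∧ w = greatCircle p v (arccos ⟪p, w⟫) := by
  set t := arccos ⟪p, w⟫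
  have hsin : 0 < sin t := sin_pos_of_pos_of_lt_pi (arccos_pos.2 h₂) (arccos_lt_pi.2 h₁)
  have hcos : cos t = ⟪p, w⟫ := cos_arccos h₁.le h₂.le
  have hsin2 : sin t ^ 2 = 1 - ⟪p, w⟫ ^ 2 := by rw [sin_sq, hcos]
  refine ⟨(sin t)⁻¹ • (w - cos t • p), ?_, ?_, ?_⟩
  · have h : ‖w - cos t • p‖ ^ 2 = sin t ^ 2 := by
      rw [@norm_sub_sq_real, real_inner_smul_right, norm_smul, hp, hw, norm_eq_abs, mul_one,
        sq_abs, hsin2, real_inner_comm p w, hcos]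
      ring
    rw [norm_smul, norm_inv, norm_eq_abs, abs_of_pos hsin,
      (pow_left_inj₀ (norm_nonneg _) hsin.le two_ne_zero).1 h, inv_mul_cancel₀ hsin.ne']
  · rw [real_inner_smul_left, inner_sub_left, real_inner_smul_left, real_inner_self_eq_norm_sq, hp,
      real_inner_comm, hcos]
    ring
  · rw [greatCircle, smul_inv_smul₀ hsin.ne', add_sub_cancel]

end GreatCircle

section Geodesic

variable {n : ℕ}

/-- `IsMinGeodesicSegment p q Γ` says `Γ = greatArc p v (Set.Icc 0 (arccos ⟪p, q⟫))`. -/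
def greatArc (p v : Eucl n) (s : Set ℝ) : Set (Sphere n) :=
  {z | ∃ t ∈ s, (z : Eucl n) = greatCircle p v t}

lemma isMinGeodesicSegment_greatArc {p v : Eucl n} (hp : ‖p‖ = 1) (hv : ‖v‖ = 1)
    (hvp : ⟪v, p⟫ = 0) {a b : ℝ} (hab : a ≤ b) (hba : b ≤ a + π) {q₁ q₂ : Sphere n}
    (hq₁ : (q₁ : Eucl n) = greatCircle p v a) (hq₂ : (q₂ : Eucl n) = greatCircle p v b) :
    IsMinGeodesicSegment q₁ q₂ (greatArc p v (Set.Icc a b)) := by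
  have hL : arccos ⟪(q₁ : Eucl n), q₂⟫ = b - a := by
    rw [hq₁, hq₂, inner_greatCircle hp hv hvp, arccos_cos (by linarith) (by linarith)]
  have hshift (t : ℝ) : cos t • (q₁ : Eucl n) + sin t • greatCircle p v (a + π / 2) =
      greatCircle p v (a + t) := by
    rw [hq₁, greatCircle_add p v a t]
  refine ⟨greatCircle p v (a + π / 2), norm_greatCircle hp hv hvp _, ?_, ?_, ?_⟩
  · rw [hq₁, inner_greatCircle hp hv hvp]
    simp
  · rw [hL, hshift, hq₂, add_sub_cancel]
  · ext z
    simp only [greatArc, hL, hshift, Set.mem_Icc]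
    constructor
    · rintro ⟨t, ⟨hat, htb⟩, hz⟩
      exact ⟨t - a, ⟨by linarith, by linarith⟩, by rw [hz, add_sub_cancel]⟩
    · rintro ⟨t, ⟨h0t, htb⟩, hz⟩
      exact ⟨a + t, ⟨by linarith, by linarith⟩, hz⟩

lemma IsMinGeodesicSegment.eq_of_neg_one_lt {p q : Sphere n} {Γ Γ' : Set (Sphere n)}
    (h : IsMinGeodesicSegment p q Γ) (h' : IsMinGeodesicSegment p q Γ')
    (hpq : -1 < ⟪(p : Eucl n), q⟫) : Γ = Γ' := by
  obtain ⟨v, -, -, hv, rfl⟩ := h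
  obtain ⟨w, -, -, hw, rfl⟩ := h'
  rcases (arccos_nonneg ⟪(p : Eucl n), q⟫).eq_or_lt with hL | hL
  · simp [← hL]
  · have hsin : sin (arccos ⟪(p : Eucl n), q⟫) ≠ 0 :=
      (sin_pos_of_pos_of_lt_pi hL (arccos_lt_pi.2 hpq)).ne'
    rw [smul_right_injective _ hsin (add_left_cancel (hv.trans hw.symm))]

lemma WeaklyConvexSet.subset_of_isMinGeodesicSegment {M : Set (Sphere n)}
    (hM : WeaklyConvexSet M) {p q : Sphere n} (hp : p ∈ M) (hq : q ∈ M)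
    (hpq : -1 < ⟪(p : Eucl n), q⟫) {Γ : Set (Sphere n)} (hΓ : IsMinGeodesicSegment p q Γ) :
    Γ ⊆ M := by
  obtain ⟨Γ', hΓ', hΓ'M⟩ := hM p hp q hq
  exact (hΓ.eq_of_neg_one_lt hΓ' hpq).trans_subset hΓ'M

lemma WeaklyConvexSet.greatArc_subset {M : Set (Sphere n)} (hM : WeaklyConvexSet M)
    {p v : Eucl n} (hp : ‖p‖ = 1) (hv : ‖v‖ = 1) (hvp : ⟪v, p⟫ = 0) {a b : ℝ} (hab : a ≤ b)
    (hba : b < a + π) {q₁ q₂ : Sphere n} (hq₁M : q₁ ∈ M) (hq₂M : q₂ ∈ M)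
    (hq₁ : (q₁ : Eucl n) = greatCircle p v a) (hq₂ : (q₂ : Eucl n) = greatCircle p v b) :
    greatArc p v (Set.Icc a b) ⊆ M := by
  refine hM.subset_of_isMinGeodesicSegment hq₁M hq₂M ?_
    (isMinGeodesicSegment_greatArc hp hv hvp hab hba.le hq₁ hq₂)
  rw [hq₁, hq₂, inner_greatCircle hp hv hvp, ← cos_pi]
  exact cos_lt_cos_of_nonneg_of_le_pi (by linarith) le_rfl (by linarith)

end Geodesic

section TangentBall

variable {E : Type*} [NormedAddCommGroup E]

lemma norm_add_le_of_forall_inner_eq_zero [InnerProductSpace ℝ E] {x c u : E} {ρ R : ℝ}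
    (hc : ⟪c, x⟫ = 0) (hu : ⟪u, x⟫ = 0) (hu0 : u ≠ 0) (hρ : 0 < ρ)
    (h : ∀ y, ⟪y, x⟫ = 0 → dist y c < ρ → ‖y‖ ≤ R) : ‖c‖ + ρ ≤ R := by
  obtain ⟨w, hw, hwx, hcw⟩ : ∃ w : E, ‖w‖ = 1 ∧ ⟪w, x⟫ = 0 ∧ c = ‖c‖ • w := by
    rcases eq_or_ne c 0 with rfl | hc0
    · exact ⟨‖u‖⁻¹ • u, norm_smul_inv_norm hu0, by rw [real_inner_smul_left, hu, mul_zero],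
        by simp⟩
    · exact ⟨‖c‖⁻¹ • c, norm_smul_inv_norm hc0, by rw [real_inner_smul_left, hc, mul_zero],
        (smul_inv_smul₀ (norm_ne_zero_iff.2 hc0) c).symm⟩
  refine le_of_forall_lt_imp_le_of_dense fun r hr => ?_
  set t := max 0 (r - ‖c‖)
  have ht : 0 ≤ t := le_max_left _ _
  have hy := h (c + t • w)
    (by rw [inner_add_left, real_inner_smul_left, hc, hwx, mul_zero, add_zero])
    (by rw [dist_eq_norm, add_sub_cancel_left, norm_smul, hw, mul_one, norm_of_nonneg ht]
        exact max_lt hρ (by linarith))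
  rw [hcw, ← add_smul, norm_smul, hw, mul_one, norm_of_nonneg (by positivity)] at hy
  linarith [le_max_right 0 (r - ‖c‖)]

lemma eq_smul_of_norm_add_le_of_norm_sub_eq [NormedSpace ℝ E] [StrictConvexSpace ℝ E] {c y : E}
    {ρ : ℝ} (hy : y ≠ 0) (hc : ‖c‖ + ρ ≤ ‖y‖) (hyc : ‖y - c‖ = ρ) :
    c = (1 - ρ / ‖y‖) • y := by
  have hcn : ‖c‖ = ‖y‖ - ρ := le_antisymm (by linarith) (by linarith [norm_sub_norm_le y c])
  have hy' : ‖y‖ ≠ 0 := norm_ne_zero_iff.2 hy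
  have := eq_lineMap_of_dist_eq_mul_of_dist_eq_mul (x := (0 : E)) (y := c) (z := y)
    (r := 1 - ρ / ‖y‖) ?_ ?_
  · simpa [AffineMap.lineMap_apply] using this
  · rw [dist_zero_left, dist_zero_left, hcn]; field_simp
  · rw [dist_comm, dist_eq_norm, hyc, dist_zero_left]; field_simp; ring

end TangentBall

section Stereo

variable {n : ℕ} (x₀ : Sphere n)

def hyperplaneBall (c : Eucl n) (ρ : ℝ) : Set (Eucl n) :=
  {y | ⟪y, (x₀ : Eucl n)⟫ = 0 ∧ dist y c < ρ}

lemma inner_stereo_center (p : Sphere n) : ⟪stereo x₀ p, (x₀ : Eucl n)⟫ = 0 := by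
  simp [stereo, inner_sub_left, real_inner_smul_left]

lemma stereo_of_mem_equator {p : Sphere n} (hp : p ∈ equator x₀) :
    stereo x₀ p = (2 : ℝ) • (p : Eucl n) := by
  have hp' : ⟪(p : Eucl n), x₀⟫ = 0 := hp
  simp [stereo, hp']

lemma inner_stereo_of_inner_eq_zero (p : Sphere n) {y : Eucl n} (hy : ⟪y, (x₀ : Eucl n)⟫ = 0) :
    ⟪stereo x₀ p, y⟫ = 2 / (1 + ⟪(p : Eucl n), x₀⟫) * ⟪(p : Eucl n), y⟫ := by
  rw [stereo, real_inner_smul_left, inner_sub_left, real_inner_smul_left,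
    real_inner_comm y (x₀ : Eucl n), hy, mul_zero, sub_zero]

lemma norm_stereo_sq (p : Sphere n) :
    ‖stereo x₀ p‖ ^ 2 = 4 * (1 - ⟪(p : Eucl n), x₀⟫) / (1 + ⟪(p : Eucl n), x₀⟫) := by
  have hsub : ‖(p : Eucl n) - ⟪(p : Eucl n), x₀⟫ • (x₀ : Eucl n)‖ ^ 2 =
      1 - ⟪(p : Eucl n), x₀⟫ ^ 2 := by
    rw [@norm_sub_sq_real, real_inner_smul_right, norm_smul, norm_eq_of_mem_sphere,
      norm_eq_of_mem_sphere, norm_eq_abs]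
    nlinarith [sq_abs ⟪(p : Eucl n), x₀⟫]
  rw [stereo, norm_smul, mul_pow, hsub, norm_eq_abs, sq_abs]
  generalize ⟪(p : Eucl n), x₀⟫ = g
  rcases eq_or_ne (1 + g) 0 with hg | hg
  · simp [hg]
  · field_simp; ring

lemma norm_stereo_le_two {p : Sphere n} (hp : p ∈ hemi x₀) : ‖stereo x₀ p‖ ≤ 2 := by
  have hg : 0 ≤ ⟪(p : Eucl n), x₀⟫ := hp
  have h4 : ‖stereo x₀ p‖ ^ 2 ≤ 2 ^ 2 := by
    rw [norm_stereo_sq, div_le_iff₀ (by positivity)]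
    linarith
  exact (pow_le_pow_iff_left₀ (norm_nonneg _) zero_le_two two_ne_zero).1 h4

lemma stereo_injOn : Set.InjOn (stereo x₀) {p | -1 < ⟪(p : Eucl n), x₀⟫} := by
  rintro p (hp : -1 < ⟪(p : Eucl n), x₀⟫) q (hq : -1 < ⟪(q : Eucl n), x₀⟫) hpq
  have hg : ⟪(p : Eucl n), x₀⟫ = ⟪(q : Eucl n), x₀⟫ := by
    have h := congrArg (‖·‖ ^ 2) hpq
    simp only [norm_stereo_sq] at h
    rw [div_eq_div_iff (by linarith) (by linarith)] at h
    linarith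
  rw [stereo, stereo, hg] at hpq
  exact Subtype.ext (by simpa using smul_right_injective _ (div_pos two_pos (by linarith)).ne' hpq)

end Stereo

section Hemisphere

variable {n : ℕ} {x₀ : Sphere n}

lemma inner_greatCircle_of_mem_equator {p : Sphere n} (hp : p ∈ equator x₀) (v : Eucl n)
    (t : ℝ) : ⟪greatCircle (p : Eucl n) v t, x₀⟫ = sin t * ⟪v, (x₀ : Eucl n)⟫ := by
  have hp' : ⟪(p : Eucl n), x₀⟫ = 0 := hp
  rw [greatCircle, inner_add_left, real_inner_smul_left, real_inner_smul_left, hp', mul_zero,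
    zero_add]

lemma hemi_subset_closure_openHemi (x : Sphere n) : hemi x ⊆ closure (openHemi x) := by
  intro w (hw : 0 ≤ ⟪(w : Eucl n), x⟫)
  rcases hw.lt_or_eq with hw | hw
  · exact subset_closure hw
  have hxw : ⟪(x : Eucl n), w⟫ = 0 := by rw [real_inner_comm, hw]
  let f : ℝ → Sphere n := fun t => ⟨greatCircle (w : Eucl n) x t, by
    simpa using norm_greatCircle (norm_eq_of_mem_sphere w) (norm_eq_of_mem_sphere x) hxw t⟩
  have hf : Continuous f := by
    refine Continuous.subtype_mk ?_ _
    unfold greatCircle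
    fun_prop
  have hfx : ∀ᶠ t in 𝓝[>] 0, f t ∈ openHemi x := by
    filter_upwards [Ioo_mem_nhdsGT pi_pos] with t ht
    show 0 < ⟪greatCircle (w : Eucl n) x t, x⟫
    rw [inner_greatCircle_of_mem_equator hw.symm, real_inner_self_eq_norm_sq,
      norm_eq_of_mem_sphere, one_pow, mul_one]
    exact sin_pos_of_pos_of_lt_pi ht.1 ht.2
  have hf0 : f 0 = w := Subtype.ext (greatCircle_zero _ _)
  exact hf0 ▸ mem_closure_of_tendsto ((hf.tendsto 0).mono_left nhdsWithin_le_nhds) hfx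

end Hemisphere

section Antipodal

variable {n : ℕ} {x₀ : Sphere n}

lemma IntSphereCond.exists_ball_subset {A : Set (Sphere n)} {p : Sphere n}
    (h : IntSphereCond x₀ A p) (hA : A ⊆ hemi x₀) (hp : p ∈ equator x₀) :
    ∃ ρ > 0, hyperplaneBall x₀ ((2 - ρ) • (p : Eucl n)) ρ ⊆ stereo x₀ '' A := by
  obtain ⟨c, hcx, ρ, hρ, hball, hpc⟩ := h
  have hp2 : ‖stereo x₀ p‖ = 2 := by
    rw [stereo_of_mem_equator x₀ hp, norm_smul, norm_eq_of_mem_sphere]; norm_num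
  have hp0 : stereo x₀ p ≠ 0 := norm_ne_zero_iff.1 (by rw [hp2]; norm_num)
  have hcρ : ‖c‖ + ρ ≤ ‖stereo x₀ p‖ := by
    refine norm_add_le_of_forall_inner_eq_zero hcx (inner_stereo_center x₀ p) hp0 hρ ?_
    intro y hyx hyc
    obtain ⟨q, hq, rfl⟩ := hball ⟨hyx, hyc⟩
    exact hp2 ▸ norm_stereo_le_two x₀ (hA hq)
  have hc : c = (2 - ρ) • (p : Eucl n) := by
    rw [eq_smul_of_norm_add_le_of_norm_sub_eq hp0 hcρ hpc, hp2, stereo_of_mem_equator x₀ hp,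
      smul_smul]
    ring_nf
  exact ⟨ρ, hρ, hc ▸ hball⟩

lemma dist_stereo_greatCircle_lt {p : Sphere n} (hp : p ∈ equator x₀) {v : Eucl n}
    (hv : ‖v‖ = 1) (hvp : ⟪v, (p : Eucl n)⟫ = 0) {ρ t : ℝ} (hρ : 0 < ρ) (ht : 0 < t)
    (ht₁ : t ≤ 1) (htρ : t ≤ ρ * ⟪v, (x₀ : Eucl n)⟫ / 2) {q : Sphere n}
    (hq : (q : Eucl n) = greatCircle (p : Eucl n) v t) :
    dist (stereo x₀ q) ((2 - ρ) • (p : Eucl n)) < ρ := by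
  set s := ⟪v, (x₀ : Eucl n)⟫
  have hs : 0 < s := by nlinarith
  have hqx : ⟪(q : Eucl n), x₀⟫ = sin t * s := hq ▸ inner_greatCircle_of_mem_equator hp v t
  have hqp : ⟪(q : Eucl n), p⟫ = cos t := by
    simpa [hq] using inner_greatCircle (norm_eq_of_mem_sphere p) hv hvp t 0
  have hsin : 0 < sin t := sin_pos_of_pos_of_lt_pi ht (by linarith [pi_gt_three])
  have hπ : 1 / 2 < 2 / π := by
    rw [div_lt_div_iff₀ two_pos pi_pos]; linarith [pi_lt_four]
  -- the arc enters the ball `‖y‖ < 2` at first order in `t`; the tangent ball departs from it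
  -- only at second order
  have key : (2 - ρ) * (1 - cos t) < ρ * (sin t * s) := calc
    (2 - ρ) * (1 - cos t) ≤ 2 * (1 - cos t) := by nlinarith [cos_le_one t]
    _ ≤ t * t := by nlinarith [one_sub_sq_div_two_le_cos (x := t)]
    _ ≤ t * (ρ * s / 2) := mul_le_mul_of_nonneg_left htρ ht.le
    _ < t * (ρ * s * (2 / π)) := mul_lt_mul_of_pos_left (by nlinarith [mul_pos hρ hs]) ht
    _ = ρ * s * (2 / π * t) := by ring
    _ ≤ ρ * s * sin t :=
      mul_le_mul_of_nonneg_left (mul_le_sin ht.le (by linarith [pi_gt_three])) (by positivity)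
    _ = ρ * (sin t * s) := by ring
  have hx₀p : ⟪(p : Eucl n), x₀⟫ = 0 := hp
  have hdist : dist (stereo x₀ q) ((2 - ρ) • (p : Eucl n)) ^ 2 - ρ ^ 2 =
      4 * ((2 - ρ) * (1 - cos t) - ρ * (sin t * s)) / (1 + sin t * s) := by
    rw [dist_eq_norm, @norm_sub_sq_real, real_inner_smul_right,
      inner_stereo_of_inner_eq_zero x₀ q hx₀p, norm_stereo_sq, hqx, hqp, norm_smul,
      norm_eq_of_mem_sphere, norm_eq_abs, mul_one, sq_abs]
    field_simp
    ring
  have hneg : dist (stereo x₀ q) ((2 - ρ) • (p : Eucl n)) ^ 2 < ρ ^ 2 := by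
    have : 4 * ((2 - ρ) * (1 - cos t) - ρ * (sin t * s)) / (1 + sin t * s) < 0 :=
      div_neg_of_neg_of_pos (by linarith) (by positivity)
    linarith
  exact (pow_lt_pow_iff_left₀ dist_nonneg hρ.le two_ne_zero).1 hneg

variable {M : Set (Sphere n)} {p q : Sphere n} {ρ : ℝ}

lemma greatArc_subset_of_ball (hwc : WeaklyConvexSet M) (hsub : M ⊆ hemi x₀) (hpM : p ∈ M)
    (hqM : q ∈ M) (hqp : (q : Eucl n) = -p) (hp : p ∈ equator x₀) (hρ : 0 < ρ)
    (hball : hyperplaneBall x₀ ((2 - ρ) • (p : Eucl n)) ρ ⊆ stereo x₀ '' M)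
    {v : Eucl n} (hv : ‖v‖ = 1) (hvp : ⟪v, (p : Eucl n)⟫ = 0) (hvx : 0 < ⟪v, (x₀ : Eucl n)⟫) :
    greatArc p v (Set.Icc 0 π) ⊆ M := by
  have hp₁ := norm_eq_of_mem_sphere p
  set t₀ := min 1 (ρ * ⟪v, (x₀ : Eucl n)⟫ / 2)
  have ht₀ : 0 < t₀ := lt_min one_pos (by positivity)
  have ht₀π : t₀ < π := (min_le_left _ _).trans_lt (by linarith [pi_gt_three])
  let q₀ : Sphere n :=
    ⟨greatCircle (p : Eucl n) v t₀, by simpa using norm_greatCircle hp₁ hv hvp t₀⟩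
  have hq₀M : q₀ ∈ M := by
    obtain ⟨m, hm, hmq⟩ := hball ⟨inner_stereo_center x₀ q₀,
      dist_stereo_greatCircle_lt hp hv hvp hρ ht₀ (min_le_left _ _) (min_le_right _ _) rfl⟩
    have hm₀ : 0 ≤ ⟪(m : Eucl n), x₀⟫ := hsub hm
    have hq₀ : 0 ≤ ⟪(q₀ : Eucl n), x₀⟫ := by
      rw [inner_greatCircle_of_mem_equator hp]
      exact mul_nonneg (sin_nonneg_of_nonneg_of_le_pi ht₀.le ht₀π.le) hvx.le
    rwa [← stereo_injOn x₀ (by linarith : -1 < ⟪(m : Eucl n), x₀⟫)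
      (by linarith : -1 < ⟪(q₀ : Eucl n), x₀⟫) hmq]
  have h₁ := hwc.greatArc_subset hp₁ hv hvp ht₀.le (by linarith) hpM hq₀M
    (greatCircle_zero _ _).symm rfl
  have h₂ := hwc.greatArc_subset hp₁ hv hvp ht₀π.le (by linarith) hq₀M hqM rfl
    (by rw [hqp, greatCircle_pi])
  rintro z ⟨t, ht, hz⟩
  rcases le_total t t₀ with h | h
  · exact h₁ ⟨t, ⟨ht.1, h⟩, hz⟩
  · exact h₂ ⟨t, ⟨h, ht.2⟩, hz⟩

lemma hemi_subset_of_ball (hcl : IsClosed M) (hwc : WeaklyConvexSet M) (hsub : M ⊆ hemi x₀)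
    (hpM : p ∈ M) (hqM : q ∈ M) (hqp : (q : Eucl n) = -p) (hp : p ∈ equator x₀) (hρ : 0 < ρ)
    (hball : hyperplaneBall x₀ ((2 - ρ) • (p : Eucl n)) ρ ⊆ stereo x₀ '' M) :
    hemi x₀ ⊆ M := by
  refine (hemi_subset_closure_openHemi x₀).trans (closure_minimal ?_ hcl)
  intro w (hw : 0 < ⟪(w : Eucl n), x₀⟫)
  have hp₀ : ⟪(p : Eucl n), x₀⟫ = 0 := hp
  have hp₁ := norm_eq_of_mem_sphere p
  have hw₁ := norm_eq_of_mem_sphere w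
  have h₁ : ⟪(p : Eucl n), w⟫ ≠ -1 := fun h => by
    rw [inner_eq_neg_one_iff_of_norm_eq_one hp₁ hw₁] at h
    rw [h, inner_neg_left] at hp₀
    linarith
  have h₂ : ⟪(p : Eucl n), w⟫ ≠ 1 := fun h => by
    rw [inner_eq_one_iff_of_norm_eq_one hp₁ hw₁] at h
    rw [h] at hp₀
    linarith
  obtain ⟨v, hv, hvp, hwv⟩ := exists_eq_greatCircle_arccos hp₁ hw₁
    ((neg_one_le_real_inner_of_norm_eq_one hp₁ hw₁).lt_of_ne h₁.symm)
    ((real_inner_le_one_of_norm_eq_one hp₁ hw₁).lt_of_ne h₂)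
  rw [hwv, inner_greatCircle_of_mem_equator hp] at hw
  have hvx : 0 < ⟪v, (x₀ : Eucl n)⟫ := pos_of_mul_pos_right hw (sin_nonneg_of_nonneg_of_le_pi
    (arccos_nonneg _) (arccos_le_pi _))
  exact greatArc_subset_of_ball hwc hsub hpM hqM hqp hp hρ hball hv hvp hvx
    ⟨_, ⟨arccos_nonneg _, arccos_le_pi _⟩, hwv⟩

end Antipodal

theorem weakly_convex_body_is_convex_body_general (n : ℕ) (x₀ : Sphere n)
    (M : Set (Sphere n)) (hcpt : IsCompact M)
    (hwc : WeaklyConvexSet M) (hsub : M ⊆ hemi x₀)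
    (hisc : ∀ p ∈ M ∩ equator x₀, IntSphereCond x₀ (closure M) p) :
    ∃ x : Sphere n, M ⊆ hemi x ∧
      ∀ p ∈ M, ∀ q ∈ M, ∀ Γ : Set (Sphere n),
        IsMinGeodesicSegment p q Γ → Γ ⊆ hemi x → Γ ⊆ M := by
  refine ⟨x₀, hsub, ?_⟩
  by_cases hanti : ∃ p ∈ M, ∃ q ∈ M, (q : Eucl n) = -p
  · obtain ⟨p, hpM, q, hqM, hqp⟩ := hanti
    have hp : p ∈ equator x₀ := by
      have hq : 0 ≤ ⟪(q : Eucl n), x₀⟫ := hsub hqM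
      rw [hqp, inner_neg_left] at hq
      exact le_antisymm (by linarith) (hsub hpM)
    have hcl := hcpt.isClosed
    simp only [hcl.closure_eq] at hisc
    obtain ⟨ρ, hρ, hball⟩ := (hisc p ⟨hpM, hp⟩).exists_ball_subset hsub hp
    have hhemi := hemi_subset_of_ball hcl hwc hsub hpM hqM hqp hp hρ hball
    exact fun _ _ _ _ Γ _ hΓ => hΓ.trans hhemi
  · -- with no antipodal pair in `M`, minimizing segments between points of `M` are unique
    refine fun p hp q hq Γ hΓ _ => hwc.subset_of_isMinGeodesicSegment hp hq ?_ hΓ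
    refine (neg_one_le_real_inner_of_norm_eq_one (norm_eq_of_mem_sphere p)
      (norm_eq_of_mem_sphere q)).lt_of_ne fun h => hanti ⟨p, hp, q, hq, ?_⟩
    rw [eq_comm, inner_eq_neg_one_iff_of_norm_eq_one (norm_eq_of_mem_sphere p)
      (norm_eq_of_mem_sphere q)] at h
    rw [h, neg_neg]

/-- A weakly convex body in a closed hemisphere `ℋ(x₀)` satisfying an
interior sphere condition at all points of `M̂ ∩ 𝒮(x₀)` is a convex body in a
hemisphere: every minimizing geodesic segment between two of its points which is
contained in the hemisphere is contained in the body. -/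
theorem weakly_convex_body_is_convex_body (n : ℕ) (hn : 1 ≤ n) (x₀ : Sphere n)
    (M : Set (Sphere n)) (hcpt : IsCompact M) (hint : (interior M).Nonempty)
    (hwc : WeaklyConvexSet M) (hsub : M ⊆ hemi x₀)
    (hisc : ∀ p ∈ M ∩ equator x₀, IntSphereCond x₀ (closure M) p) :
    ∃ x : Sphere n, M ⊆ hemi x ∧
      ∀ p ∈ M, ∀ q ∈ M, ∀ Γ : Set (Sphere n),
        IsMinGeodesicSegment p q Γ → Γ ⊆ hemi x → Γ ⊆ M :=
  weakly_convex_body_is_convex_body_general n x₀ M hcpt hwc hsub hisc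
end
end

section
/- Let n ≥ 1 and let M̂ ⊆ S^{n+1} be a convex body in the sphere (a compact convex set with nonempty interior) which does not contain any pair of antipodal points (i.e., there is no p with p ∈ M̂ and −p ∈ M̂). Then M̂ is contained in an open hemisphere: there exists x₀ ∈ S^{n+1} with M̂ ⊆ int ℋ(x₀). -/
open scoped RealInnerProductSpace

noncomputable section

/-!
Spherical convexity and the absence of antipodal pairs make every nonzero combination
`a p + b q` (`a, b ≥ 0`) of points of `M` a positive multiple of a point of `M`: normalised, it lies
on the minimizing arc from `p` to `q`. So the cone `ℝ_{>0} • M` is convex, hence contains the convex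
hull `K` of `M`, and `0 ∉ K`. As `K` is compact, Hahn–Banach separates `0` strictly from `K` by a
functional `⟪w, ·⟫`, and `M` lies in the open hemisphere centred at `w / ‖w‖`.
-/

open Real Set Module
open scoped Pointwise

theorem isCompact_convexHull {E : Type*} [NormedAddCommGroup E] [NormedSpace ℝ E]
    [FiniteDimensional ℝ E] {s : Set E} (hs : IsCompact s) : IsCompact (convexHull ℝ s) := by
  have hcarath : convexHull ℝ s = ⋃ k ∈ Finset.range (finrank ℝ E + 2),
      (fun wz : (Fin k → ℝ) × (Fin k → E) ↦ ∑ i, wz.1 i • wz.2 i) ''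
        (stdSimplex ℝ (Fin k) ×ˢ univ.pi fun _ ↦ s) := by
    refine Subset.antisymm (fun x hx ↦ ?_) (iUnion₂_subset fun k _ ↦ ?_)
    · obtain ⟨ι, _, z, w, hzs, hz, hw₀, hw₁, rfl⟩ := eq_pos_convex_span_of_mem_convexHull hx
      have hcard : Fintype.card ι < finrank ℝ E + 2 :=
        Nat.lt_succ_of_le <| hz.card_le_finrank_succ.trans <| by grw [Submodule.finrank_le]
      let e := Fintype.equivFin ι
      refine mem_iUnion₂.2 ⟨_, Finset.mem_range.2 hcard, (w ∘ e.symm, z ∘ e.symm),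
        ⟨⟨fun i ↦ (hw₀ _).le, ?_⟩, fun i _ ↦ hzs (mem_range_self _)⟩, ?_⟩
      · simpa [e.symm.sum_comp] using hw₁
      · exact e.symm.sum_comp fun i ↦ w i • z i
    · rintro _ ⟨⟨w, z⟩, ⟨⟨hw₀, hw₁⟩, hz⟩, rfl⟩
      exact (convex_convexHull ℝ s).sum_mem (fun i _ ↦ hw₀ i) hw₁
        fun i _ ↦ subset_convexHull ℝ s (hz i (mem_univ i))
  rw [hcarath]
  exact (Finset.range _).isCompact_biUnion fun k _ ↦
    ((isCompact_stdSimplex ℝ (Fin k)).prod (isCompact_univ_pi fun _ ↦ hs)).image (by fun_prop)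

theorem exists_pos_mul_cos_sin_of_nonneg {a b L : ℝ} (ha : 0 ≤ a) (hb : 0 ≤ b) (hab : 0 < a + b)
    (hL : L ∈ Ico 0 π) :
    ∃ N > 0, ∃ s ∈ Icc 0 L, N * cos s = a + b * cos L ∧ N * sin s = b * sin L := by
  set z : ℂ := a + b * Complex.exp (L * Complex.I)
  have hre : z.re = a + b * cos L := by simp [z, Complex.exp_ofReal_mul_I_re]
  have him : z.im = b * sin L := by simp [z, Complex.exp_ofReal_mul_I_im]
  have hz_le : ‖z‖ ≤ a + b := by
    simpa [abs_of_nonneg ha, abs_of_nonneg hb] using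
      norm_add_le (a : ℂ) (b * Complex.exp (L * Complex.I))
  have hz_ge : b - a ≤ ‖z‖ := by
    simpa [abs_of_nonneg ha, abs_of_nonneg hb, z, add_comm] using
      norm_sub_norm_le (b * Complex.exp (L * Complex.I)) (-(a : ℂ))
  have hz : 0 < ‖z‖ := by
    refine norm_pos_iff.2 fun h0 ↦ ?_
    have hre0 : a + b * cos L = 0 := by rw [← hre, h0, Complex.zero_re]
    have him0 : b * sin L = 0 := by rw [← him, h0, Complex.zero_im]
    rcases hL.1.eq_or_lt with rfl | hL0
    · simp only [cos_zero, mul_one] at hre0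
      linarith
    · rcases mul_eq_zero.1 him0 with rfl | hsin
      · linarith
      · linarith [sin_pos_of_pos_of_lt_pi hL0 hL.2]
  have harg : 0 ≤ z.arg :=
    Complex.arg_nonneg_iff.2 (him ▸ mul_nonneg hb (sin_nonneg_of_nonneg_of_le_pi hL.1 hL.2.le))
  refine ⟨‖z‖, hz, z.arg, ⟨harg, ?_⟩, (Complex.norm_mul_cos_arg z).trans hre,
    (Complex.norm_mul_sin_arg z).trans him⟩
  -- `re z - ‖z‖ cos L` is the average of `(1 + cos L)(a + b - ‖z‖)` and `(1 - cos L)(a - b + ‖z‖)`.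
  have hcos : ‖z‖ * cos L ≤ ‖z‖ * cos z.arg := by
    nlinarith [Complex.norm_mul_cos_arg z,
      mul_nonneg (sub_nonneg.2 hz_le) (by linarith [neg_one_le_cos L] : 0 ≤ 1 + cos L),
      mul_nonneg (by linarith : 0 ≤ a - b + ‖z‖) (by linarith [cos_le_one L] : 0 ≤ 1 - cos L)]
  exact (strictAntiOn_cos.le_iff_ge ⟨hL.1, hL.2.le⟩ ⟨harg, z.arg_le_pi⟩).1
    (le_of_mul_le_mul_left hcos hz)

theorem norm_cos_smul_add_sin_smul {E : Type*} [NormedAddCommGroup E] [InnerProductSpace ℝ E]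
    {p v : E} (hp : ‖p‖ = 1) (hv : ‖v‖ = 1) (hvp : ⟪v, p⟫ = 0) (t : ℝ) :
    ‖cos t • p + sin t • v‖ = 1 := by
  have hsq : ‖cos t • p + sin t • v‖ ^ 2 = 1 := by
    rw [norm_add_sq_real, norm_smul, norm_smul, real_inner_smul_left, real_inner_smul_right,
      real_inner_comm, hvp, hp, hv, norm_eq_abs, norm_eq_abs]
    simp only [mul_one, mul_zero, add_zero, sq_abs, cos_sq_add_sin_sq]
  exact (pow_eq_one_iff_of_nonneg (norm_nonneg _) two_ne_zero).1 hsq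

theorem IsMinGeodesicSegment.exists_pos_smul_eq_smul_add_smul {n : ℕ} {p q : Sphere n}
    {Γ : Set (Sphere n)} (hΓ : IsMinGeodesicSegment p q Γ) (hpq : (q : Eucl n) ≠ -p)
    {a b : ℝ} (ha : 0 ≤ a) (hb : 0 ≤ b) (hab : 0 < a + b) :
    ∃ r ∈ Γ, ∃ t : ℝ, 0 < t ∧ a • (p : Eucl n) + b • (q : Eucl n) = t • (r : Eucl n) := by
  obtain ⟨v, hv, hvp, hq, rfl⟩ := hΓ
  have hL : arccos ⟪(p : Eucl n), q⟫ ∈ Ico 0 π := by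
    refine ⟨arccos_nonneg _, arccos_lt_pi.2 <| (neg_one_le_real_inner_of_norm_eq_one
      (norm_eq_of_mem_sphere p) (norm_eq_of_mem_sphere q)).lt_of_ne fun h ↦ hpq ?_⟩
    rw [← inner_eq_neg_one_iff_of_norm_eq_one (𝕜 := ℝ) (norm_eq_of_mem_sphere q)
      (norm_eq_of_mem_sphere p), real_inner_comm, h]
  obtain ⟨N, hN, s, hs, hcos, hsin⟩ := exists_pos_mul_cos_sin_of_nonneg ha hb hab hL
  refine ⟨⟨cos s • (p : Eucl n) + sin s • v, mem_sphere_zero_iff_norm.2 <|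
    norm_cos_smul_add_sin_smul (norm_eq_of_mem_sphere p) hv hvp s⟩, ⟨s, hs, rfl⟩, N, hN, ?_⟩
  rw [← hq]
  match_scalars <;> linarith

theorem exists_isMinGeodesicSegment {n : ℕ} {p q : Sphere n} (hqp : q ≠ p)
    (hpq : (q : Eucl n) ≠ -p) : ∃ Γ, IsMinGeodesicSegment p q Γ := by
  have hp := norm_eq_of_mem_sphere p
  have hq := norm_eq_of_mem_sphere q
  set c := ⟪(p : Eucl n), q⟫
  set u := (q : Eucl n) - c • p
  have hc : c ^ 2 < 1 := by
    refine (sq_lt_one_iff_abs_lt_one c).2 (abs_lt.2 ⟨?_, ?_⟩)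
    · refine (neg_one_le_real_inner_of_norm_eq_one hp hq).lt_of_ne fun h ↦ hpq ?_
      rw [← inner_eq_neg_one_iff_of_norm_eq_one (𝕜 := ℝ) hq hp, real_inner_comm, h]
    · refine (real_inner_le_one_of_norm_eq_one hp hq).lt_of_ne fun h ↦ hqp ?_
      exact Subtype.ext ((inner_eq_one_iff_of_norm_eq_one (𝕜 := ℝ) hp hq).1 h).symm
  have hu : ‖u‖ ^ 2 = 1 - c ^ 2 := by
    rw [norm_sub_sq_real, norm_smul, real_inner_smul_right, hp, hq, norm_eq_abs, mul_one, sq_abs,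
      real_inner_comm]
    ring
  have hu0 : u ≠ 0 := by
    rintro h
    rw [h, norm_zero] at hu
    linarith
  refine ⟨_, ‖u‖⁻¹ • u, norm_smul_inv_norm hu0, ?_, ?_, rfl⟩
  · rw [real_inner_smul_left, inner_sub_left, real_inner_smul_left, real_inner_self_eq_norm_sq,
      hp, real_inner_comm]
    ring
  · rw [cos_arccos (by nlinarith) (by nlinarith), sin_arccos, ← hu, sqrt_sq (norm_nonneg _),
      smul_smul, mul_inv_cancel₀ (norm_ne_zero_iff.2 hu0), one_smul, add_sub_cancel]

theorem SphConvexSet.exists_pos_smul_eq_smul_add_smul {n : ℕ} {M : Set (Sphere n)}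
    (hM : SphConvexSet M) {p q : Sphere n} (hp : p ∈ M) (hq : q ∈ M) (hpq : (q : Eucl n) ≠ -p)
    {a b : ℝ} (ha : 0 ≤ a) (hb : 0 ≤ b) (hab : 0 < a + b) :
    ∃ r ∈ M, ∃ t : ℝ, 0 < t ∧ a • (p : Eucl n) + b • (q : Eucl n) = t • (r : Eucl n) := by
  rcases eq_or_ne q p with rfl | hqp
  · exact ⟨q, hq, a + b, hab, (add_smul a b _).symm⟩
  obtain ⟨Γ, hΓ⟩ := exists_isMinGeodesicSegment hqp hpq
  obtain ⟨r, hr, h⟩ := hΓ.exists_pos_smul_eq_smul_add_smul hpq ha hb hab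
  exact ⟨r, hM p hp q hq Γ hΓ hr, h⟩

theorem SphConvexSet.convex_Ioi_smul {n : ℕ} {M : Set (Sphere n)} (hM : SphConvexSet M)
    (hanti : ∀ p ∈ M, ∀ q ∈ M, (q : Eucl n) ≠ -p) :
    Convex ℝ (Ioi (0 : ℝ) • ((↑) '' M : Set (Eucl n))) := by
  rintro _ ⟨s, (hs : 0 < s), _, ⟨p, hp, rfl⟩, rfl⟩ _ ⟨s', (hs' : 0 < s'), _, ⟨q, hq, rfl⟩, rfl⟩
    a b ha hb hab
  have hpos : 0 < a * s + b * s' := by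
    nlinarith [mul_le_mul_of_nonneg_left (min_le_left s s') ha,
      mul_le_mul_of_nonneg_left (min_le_right s s') hb, lt_min hs hs']
  obtain ⟨r, hr, t, ht, h⟩ := hM.exists_pos_smul_eq_smul_add_smul hp hq (hanti p hp q hq)
    (mul_nonneg ha hs.le) (mul_nonneg hb hs'.le) hpos
  exact ⟨t, ht, r, ⟨r, hr, rfl⟩, by rw [smul_smul, smul_smul, h]⟩

theorem SphConvexSet.zero_notMem_convexHull {n : ℕ} {M : Set (Sphere n)} (hM : SphConvexSet M)
    (hanti : ∀ p ∈ M, ∀ q ∈ M, (q : Eucl n) ≠ -p) :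
    (0 : Eucl n) ∉ convexHull ℝ ((↑) '' M : Set (Eucl n)) := fun h0 ↦ by
  obtain ⟨t, (ht : 0 < t), _, ⟨r, -, rfl⟩, hr⟩ :=
    convexHull_min (t := Ioi (0 : ℝ) • ((↑) '' M : Set (Eucl n)))
      (fun x hx ↦ ⟨1, mem_Ioi.2 one_pos, x, hx, one_smul ℝ x⟩) (hM.convex_Ioi_smul hanti) h0
  simpa [norm_smul, ht.ne'] using congrArg norm hr

theorem exists_subset_openHemi_of_forall_inner_pos {n : ℕ} {M : Set (Sphere n)} (w : Eucl n)
    (hw : ∀ p ∈ M, 0 < ⟪w, (p : Eucl n)⟫) : ∃ x₀ : Sphere n, M ⊆ openHemi x₀ := by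
  rcases eq_or_ne w 0 with rfl | hw0
  · obtain ⟨x₀⟩ : Nonempty (Sphere n) := (NormedSpace.sphere_nonempty.2 zero_le_one).to_subtype
    exact ⟨x₀, fun p hp ↦ absurd (hw p hp) (by simp)⟩
  refine ⟨⟨‖w‖⁻¹ • w, mem_sphere_zero_iff_norm.2 (norm_smul_inv_norm hw0)⟩, fun p hp ↦ ?_⟩
  change 0 < ⟪(p : Eucl n), ‖w‖⁻¹ • w⟫
  rw [real_inner_smul_right, real_inner_comm]
  exact mul_pos (inv_pos.2 (norm_pos_iff.2 hw0)) (hw p hp)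

theorem convex_body_no_antipodal_in_open_hemisphere_general (n : ℕ)
    (M : Set (Sphere n)) (hcpt : IsCompact M)
    (hconv : SphConvexSet M)
    (hanti : ¬ ∃ p ∈ M, ∃ q ∈ M, (q : Eucl n) = -(p : Eucl n)) :
    ∃ x₀ : Sphere n, M ⊆ openHemi x₀ := by
  push Not at hanti
  set K := convexHull ℝ ((↑) '' M : Set (Eucl n))
  have hK : IsCompact K := isCompact_convexHull (hcpt.image continuous_subtype_val)
  obtain ⟨f, u, hf0, hfK⟩ := geometric_hahn_banach_point_closed (convex_convexHull ℝ _)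
    hK.isClosed (hconv.zero_notMem_convexHull hanti)
  refine exists_subset_openHemi_of_forall_inner_pos ((InnerProductSpace.toDual ℝ _).symm f)
    fun p hp ↦ ?_
  rw [InnerProductSpace.toDual_symm_apply]
  exact (map_zero f ▸ hf0).trans (hfK _ (subset_convexHull ℝ _ ⟨p, hp, rfl⟩))

/-- a convex body in the sphere containing no pair of antipodal points
is contained in an open hemisphere. -/
theorem convex_body_no_antipodal_in_open_hemisphere (n : ℕ) (hn : 1 ≤ n)
    (M : Set (Sphere n)) (hcpt : IsCompact M) (hint : (interior M).Nonempty)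
    (hconv : SphConvexSet M)
    (hanti : ¬ ∃ p ∈ M, ∃ q ∈ M, (q : Eucl n) = -(p : Eucl n)) :
    ∃ x₀ : Sphere n, M ⊆ openHemi x₀ :=
  convex_body_no_antipodal_in_open_hemisphere_general n M hcpt hconv hanti
end
end

section
/- Let (M̂_m)_{m∈ℕ} be a sequence of subsets of S^{n+1} and (x_m)_{m∈ℕ} a sequence of points of S^{n+1} such that M̂_m ⊆ ℋ(x_m) for every m and M̂_m ⊆ interior(M̂_{m+1}) for every m. Then there exists x₀ ∈ S^{n+1} such that M̂_m ⊆ int ℋ(x₀) for all m ∈ ℕ. -/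
open scoped RealInnerProductSpace

noncomputable section

lemma interior_hemi_subset_openHemi {n : ℕ} (x₀ : Sphere n) :
    interior (hemi x₀) ⊆ openHemi x₀ := by
  intro p hp
  have hp0 : 0 ≤ ⟪(p : Eucl n), (x₀ : Eucl n)⟫ := (interior_subset hp : p ∈ hemi x₀)
  rcases hp0.lt_or_eq with h | h
  · exact h
  exfalso
  have hpx : ⟪(p : Eucl n), (x₀ : Eucl n)⟫ = 0 := h.symm
  have hpn : ‖(p : Eucl n)‖ = 1 := mem_sphere_zero_iff_norm.mp p.2
  have hxn : ‖(x₀ : Eucl n)‖ = 1 := mem_sphere_zero_iff_norm.mp x₀.2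
  have gmem : ∀ t : ℝ,
      (Real.cos t • (p : Eucl n) - Real.sin t • (x₀ : Eucl n)) ∈ Metric.sphere (0 : Eucl n) 1 := by
    intro t
    rw [mem_sphere_zero_iff_norm]
    have hsq : ‖Real.cos t • (p : Eucl n) - Real.sin t • (x₀ : Eucl n)‖ ^ 2 = 1 := by
      rw [norm_sub_sq_real, real_inner_smul_left, real_inner_smul_right, hpx,
        norm_smul, norm_smul, mul_pow, mul_pow]
      simp [Real.norm_eq_abs, sq_abs, hpn, hxn]
    have hnn := norm_nonneg (Real.cos t • (p : Eucl n) - Real.sin t • (x₀ : Eucl n))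
    nlinarith
  set G : ℝ → Sphere n := fun t => ⟨Real.cos t • (p : Eucl n) - Real.sin t • (x₀ : Eucl n), gmem t⟩
  have hGcont : Continuous G :=
    ((Real.continuous_cos.smul continuous_const).sub
      (Real.continuous_sin.smul continuous_const)).subtype_mk _
  have hG0 : G 0 = p := by
    apply Subtype.ext
    simp [G]
  have hT : Filter.Tendsto G (nhds 0) (nhds p) := by
    rw [← hG0]; exact hGcont.tendsto 0
  have hU : interior (hemi x₀) ∈ nhds p := isOpen_interior.mem_nhds hp
  have hev : ∀ᶠ t in nhdsWithin 0 (Set.Ioi 0), G t ∈ interior (hemi x₀) :=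
    nhdsWithin_le_nhds (hT hU)
  have hIoo : Set.Ioo (0 : ℝ) Real.pi ∈ nhdsWithin (0:ℝ) (Set.Ioi 0) :=
    Ioo_mem_nhdsGT_of_mem ⟨le_refl 0, Real.pi_pos⟩
  obtain ⟨t, ht1, ht2⟩ := (hev.and (Filter.eventually_of_mem hIoo fun _ h => h)).exists
  have hmem : 0 ≤ ⟪(G t : Eucl n), (x₀ : Eucl n)⟫ := (interior_subset ht1 : G t ∈ hemi x₀)
  have hval : ⟪(G t : Eucl n), (x₀ : Eucl n)⟫ = -Real.sin t := by
    show ⟪Real.cos t • (p : Eucl n) - Real.sin t • (x₀ : Eucl n), (x₀ : Eucl n)⟫ = -Real.sin t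
    rw [inner_sub_left, real_inner_smul_left, real_inner_smul_left, hpx,
      real_inner_self_eq_norm_sq, hxn]
    ring
  have hsin : 0 < Real.sin t := Real.sin_pos_of_pos_of_lt_pi ht2.1 ht2.2
  rw [hval] at hmem
  linarith

/-- an increasing sequence of sets, each contained in some closed
hemisphere and each contained in the interior of the next, is contained in a
common open hemisphere. -/
theorem common_open_hemisphere (n : ℕ) (M : ℕ → Set (Sphere n)) (x : ℕ → Sphere n)
    (hsub : ∀ m : ℕ, M m ⊆ hemi (x m))
    (hmono : ∀ m : ℕ, M m ⊆ interior (M (m + 1))) :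
    ∃ x₀ : Sphere n, ∀ m : ℕ, M m ⊆ openHemi x₀ := by
  obtain ⟨x₀, -, φ, hφ, hlim⟩ :=
    isCompact_univ.tendsto_subseq (x := x) (fun m => Set.mem_univ _)
  refine ⟨x₀, fun m p hp => ?_⟩
  have hchain : ∀ a b : ℕ, a ≤ b → M a ⊆ M b := by
    intro a b hab
    induction b, hab using Nat.le_induction with
    | base => exact le_rfl
    | succ b hab ih => exact ih.trans ((hmono b).trans interior_subset)
  have hhemi : M (m + 1) ⊆ hemi x₀ := by
    intro q hq
    have h2 : Filter.Tendsto (fun k => ⟪(q : Eucl n), (x (φ k) : Eucl n)⟫) Filter.atTop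
        (nhds ⟪(q : Eucl n), (x₀ : Eucl n)⟫) := by
      have hv : Filter.Tendsto (fun k => ((x (φ k) : Eucl n))) Filter.atTop
          (nhds (x₀ : Eucl n)) := (continuous_subtype_val.tendsto x₀).comp hlim
      exact ((Continuous.inner continuous_const continuous_id).tendsto _).comp hv
    refine ge_of_tendsto h2 ?_
    filter_upwards [Filter.eventually_ge_atTop (m + 1)] with k hk
    exact hsub (φ k) (hchain _ _ (hk.trans (hφ.le_apply)) hq)
  have : p ∈ interior (hemi x₀) := interior_mono hhemi (hmono m hp)
  exact interior_hemi_subset_openHemi x₀ this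
end
end

section
/- Let F : Sym⁺_n → ℝ be twice continuously differentiable, positive, positively homogeneous of degree 1, such that ∇F(A) is positive definite for every A ∈ Sym⁺_n, and inverse concave. Then for every A ∈ Sym⁺_n and every symmetric matrix η ∈ Sym_n one has D²F(A)[η,η] + 2·tr(∇F(A)·η·A⁻¹·η) − (2/F(A))·(tr(∇F(A)·η))² ≥ 0. -/
/-!
Put `ζ = A⁻¹ η A⁻¹` and follow the line `t ↦ A⁻¹ + t ζ` through `A⁻¹`; it stays positive definite
near `t = 0`. By inverse concavity, `g t = 1 / φ t` with `φ t = F ((A⁻¹ + t ζ)⁻¹)` is concave there,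
so `g''(0) = (2 φ'(0)² - φ(0) φ''(0)) / φ(0)³ ≤ 0`. Along the curve `B t = (A⁻¹ + t ζ)⁻¹` one has
`B(0) = A`, `B'(0) = -η` and `B''(0) = 2 η A⁻¹ η`, so `φ'(0) = -DF(A)[η]` and
`φ''(0) = D²F(A)[η,η] + 2 DF(A)[η A⁻¹ η]`, which turns `g''(0) ≤ 0` into the inequality.
-/

noncomputable section

open Matrix

attribute [local instance] Matrix.normedAddCommGroup Matrix.normedSpace

open Filter Set Topology

theorem Continuous.isOpen_setOf_posDef {X m : Type*} [TopologicalSpace X] [Fintype m]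
    {M : X → Matrix m m ℝ} (hM : Continuous M) (hherm : ∀ x, (M x).IsHermitian) :
    IsOpen {x | (M x).PosDef} := by
  refine isOpen_iff_mem_nhds.mpr fun x₀ h₀ => ?_
  have hquad : Continuous fun p : X × (m → ℝ) => p.2 ⬝ᵥ (M p.1 *ᵥ p.2) :=
    continuous_snd.dotProduct ((hM.comp continuous_fst).matrix_mulVec continuous_snd)
  -- positivity on the unit sphere at `x₀` persists nearby, uniformly by compactness
  have hsphere : ∀ᶠ x in 𝓝 x₀, ∀ v ∈ Metric.sphere (0 : m → ℝ) 1, 0 < v ⬝ᵥ (M x *ᵥ v) := by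
    refine (isCompact_sphere 0 1).eventually_forall_of_forall_eventually fun v hv => ?_
    have hv0 : v ≠ 0 := ne_zero_of_mem_unit_sphere ⟨v, hv⟩
    exact (hquad.tendsto (x₀, v)).eventually_const_lt (by simpa using h₀.dotProduct_mulVec_pos hv0)
  filter_upwards [hsphere] with x hx
  refine PosDef.of_dotProduct_mulVec_pos (hherm x) fun v hv => ?_
  have hnorm : ‖v‖ ≠ 0 := norm_ne_zero_iff.mpr hv
  have := hx (‖v‖⁻¹ • v) (by simp [norm_smul, hnorm])
  rw [mulVec_smul, dotProduct_smul, smul_dotProduct, smul_eq_mul, smul_eq_mul, ← mul_assoc] at this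
  simpa using pos_of_mul_pos_right this (by positivity)

theorem ConcaveOn.comp_add_smul {𝕜 E β : Type*} [Field 𝕜] [LinearOrder 𝕜] [AddCommGroup E]
    [Module 𝕜 E] [AddCommMonoid β] [PartialOrder β] [SMul 𝕜 β] {s : Set E} {f : E → β}
    (hf : ConcaveOn 𝕜 s f) (x v : E) :
    ConcaveOn 𝕜 {t : 𝕜 | x + t • v ∈ s} (fun t => f (x + t • v)) := by
  have := hf.comp_affineMap (AffineMap.lineMap x (x + v))
  simpa [Set.preimage, Function.comp_def, AffineMap.lineMap_apply_module', add_comm] using this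

theorem ConcaveOn.nonpos_of_hasDerivAt2 {s : Set ℝ} {f f' : ℝ → ℝ} {f'' x : ℝ}
    (hf : ConcaveOn ℝ s f) (hs : s ∈ 𝓝 x) (hf' : ∀ y ∈ s, HasDerivAt f (f' y) y)
    (hf'' : HasDerivAt f' f'' x) : f'' ≤ 0 := by
  have hanti : AntitoneOn f' s := fun a ha b hb hab => by
    simpa only [(hf' a ha).deriv, (hf' b hb).deriv] using
      hf.antitoneOn_deriv (fun y hy => (hf' y hy).differentiableAt) ha hb hab
  have hacc : AccPt x (𝓟 s) := by
    simpa using (PerfectSpace.univ_preperfect x (mem_univ x)).nhds_inter hs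
  exact hf''.hasDerivWithinAt.nonpos_of_antitoneOn hacc hanti

theorem two_mul_sq_deriv_le_of_concaveOn_inv {s : Set ℝ} {φ φ' : ℝ → ℝ} {φ'' x : ℝ}
    (hconc : ConcaveOn ℝ s fun y => (φ y)⁻¹) (hs : s ∈ 𝓝 x) (hpos : ∀ y ∈ s, 0 < φ y)
    (hφ : ∀ y ∈ s, HasDerivAt φ (φ' y) y) (hφ' : HasDerivAt φ' φ'' x) :
    2 * φ' x ^ 2 ≤ φ x * φ'' := by
  have hx := hpos x (mem_of_mem_nhds hs)
  have hinv : ∀ y ∈ s, HasDerivAt (fun y => (φ y)⁻¹) (-φ' y / φ y ^ 2) y := fun y hy =>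
    (hφ y hy).inv (hpos y hy).ne'
  have hinv' := (hφ'.neg).div ((hφ x (mem_of_mem_nhds hs)).pow 2) (pow_pos hx 2).ne'
  have := hconc.nonpos_of_hasDerivAt2 hs hinv hinv'
  simp only [Pi.neg_apply, Pi.pow_apply, Nat.cast_ofNat, Nat.add_one_sub_one, pow_one] at this
  rw [div_le_iff₀ (by positivity), zero_mul] at this
  nlinarith

theorem hasDerivAt_ringInverse_add_smul {𝕜 R : Type*} [NontriviallyNormedField 𝕜] [NormedRing R]
    [NormedAlgebra 𝕜 R] [HasSummableGeomSeries R] {x y : R} {t : 𝕜} (h : IsUnit (x + t • y)) :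
    HasDerivAt (fun s : 𝕜 => Ring.inverse (x + s • y))
      (-(Ring.inverse (x + t • y) * y * Ring.inverse (x + t • y))) t := by
  rw [← h.unit_spec, Ring.inverse_unit]
  have := (hasFDerivAt_ringInverse (𝕜 := 𝕜) h.unit).comp_hasDerivAt t
    (((hasDerivAt_id t).smul_const y).const_add x)
  simp only [one_smul] at this
  exact this

namespace Matrix

variable {m 𝕜 : Type*} [Fintype m] [DecidableEq m] [NontriviallyNormedField 𝕜] [CompleteSpace 𝕜]

-- The operator norm makes matrices a complete normed algebra; derivatives only see the topology.
theorem hasDerivAt_inv_add_smul {A B : Matrix m m 𝕜} {t : 𝕜} (h : IsUnit (A + t • B)) :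
    HasDerivAt (fun s : 𝕜 => (A + s • B)⁻¹) (-((A + t • B)⁻¹ * B * (A + t • B)⁻¹)) t := by
  let := Matrix.linftyOpNormedRing (n := m) (α := 𝕜)
  let := Matrix.linftyOpNormedAlgebra (n := m) (α := 𝕜) (R := 𝕜)
  have : HasSummableGeomSeries (Matrix m m 𝕜) :=
    @instHasSummableGeomSeriesOfCompleteSpace _ _ (FiniteDimensional.complete 𝕜 _)
  simp only [nonsing_inv_eq_ringInverse]
  exact hasDerivAt_ringInverse_add_smul h

theorem hasDerivAt_neg_inv_mul_mul_inv_add_smul {A B : Matrix m m 𝕜} {t : 𝕜}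
    (h : IsUnit (A + t • B)) :
    HasDerivAt (fun s : 𝕜 => -((A + s • B)⁻¹ * B * (A + s • B)⁻¹))
      (2 • ((A + t • B)⁻¹ * B * (A + t • B)⁻¹ * B * (A + t • B)⁻¹)) t := by
  let := Matrix.linftyOpNormedRing (n := m) (α := 𝕜)
  let := Matrix.linftyOpNormedAlgebra (n := m) (α := 𝕜) (R := 𝕜)
  have hinv := hasDerivAt_inv_add_smul h
  exact (((hinv.mul_const B).mul hinv).neg).congr_deriv (by noncomm_ring)

end Matrix

theorem two_mul_sq_fderiv_le_of_inverse_concave {m : Type*} [Fintype m] [DecidableEq m]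
    {F : Matrix m m ℝ → ℝ} {DF : Matrix m m ℝ → (Matrix m m ℝ →L[ℝ] ℝ)}
    {D2F : Matrix m m ℝ → (Matrix m m ℝ →L[ℝ] Matrix m m ℝ →L[ℝ] ℝ)}
    (hDF : ∀ A : Matrix m m ℝ, A.PosDef → HasFDerivWithinAt F (DF A) {B | B.PosDef} A)
    (hD2F : ∀ A : Matrix m m ℝ, A.PosDef → HasFDerivWithinAt DF (D2F A) {B | B.PosDef} A)
    (hpos : ∀ A : Matrix m m ℝ, A.PosDef → 0 < F A)
    (hinvconc : ConcaveOn ℝ {B : Matrix m m ℝ | B.PosDef} fun B => (F B⁻¹)⁻¹)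
    {A η : Matrix m m ℝ} (hA : A.PosDef) (hη : η.IsHermitian) :
    2 * DF A η ^ 2 ≤ F A * (D2F A η η + 2 * DF A (η * A⁻¹ * η)) := by
  set ζ := A⁻¹ * η * A⁻¹ with hζ_def
  set s := {t : ℝ | (A⁻¹ + t • ζ).PosDef}
  set B : ℝ → Matrix m m ℝ := fun t => (A⁻¹ + t • ζ)⁻¹
  have hζ : ζ.IsHermitian := by
    have := isHermitian_conjTranspose_mul_mul A⁻¹ hη
    rwa [hA.inv.1.eq] at this
  have hs : IsOpen s := Continuous.isOpen_setOf_posDef (by fun_prop) fun t =>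
    hA.inv.1.add (hζ.smul (IsSelfAdjoint.all t))
  have h0 : (0 : ℝ) ∈ s := by simpa [s] using hA.inv
  have hBpd : ∀ t ∈ s, (B t).PosDef := fun t ht => PosDef.inv ht
  have hnear : ∀ t ∈ s, ∀ᶠ t' in 𝓝 t, B t' ∈ {M | M.PosDef} := fun t ht =>
    eventually_of_mem (hs.mem_nhds ht) hBpd
  have hB : ∀ t ∈ s, HasDerivAt B (-(B t * ζ * B t)) t := fun t ht =>
    hasDerivAt_inv_add_smul (PosDef.isUnit ht)
  have hφ : ∀ t ∈ s, HasDerivAt (fun t => F (B t)) (DF (B t) (-(B t * ζ * B t))) t :=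
    fun t ht => (hDF _ (hBpd t ht)).comp_hasDerivAt t (hB t ht) (hnear t ht)
  have hφ' : HasDerivAt (fun t => DF (B t) (-(B t * ζ * B t)))
      (D2F (B 0) (-(B 0 * ζ * B 0)) (-(B 0 * ζ * B 0))
        + DF (B 0) (2 • (B 0 * ζ * B 0 * ζ * B 0))) 0 := by
    -- instance synthesis does not find the normed structure on `Matrix m m ℝ →L[ℝ] ℝ` here
    let : NormedAddCommGroup (Matrix m m ℝ →L[ℝ] ℝ) := ContinuousLinearMap.toNormedAddCommGroup
    let : NormedSpace ℝ (Matrix m m ℝ →L[ℝ] ℝ) := ContinuousLinearMap.toNormedSpace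
    exact ((hD2F _ (hBpd 0 h0)).comp_hasDerivAt 0 (hB 0 h0) (hnear 0 h0)).clm_apply
      (hasDerivAt_neg_inv_mul_mul_inv_add_smul (PosDef.isUnit h0))
  have key := two_mul_sq_deriv_le_of_concaveOn_inv (hinvconc.comp_add_smul A⁻¹ ζ)
    (hs.mem_nhds h0) (fun t ht => hpos _ (hBpd t ht)) hφ hφ'
  have : Invertible A := hA.isUnit.invertible
  have hAζA : A * ζ * A = η := by simp [hζ_def, Matrix.mul_assoc]
  have hηζA : η * ζ * A = η * A⁻¹ * η := by simp [hζ_def, Matrix.mul_assoc]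
  simp only [B, zero_smul, add_zero, inv_inv_of_invertible, hAζA, hηζA] at key
  simpa [two_smul, two_mul] using key

theorem inverse_concave_inequality_general (n : ℕ) (F : Matrix (Fin n) (Fin n) ℝ → ℝ)
    (DF : Matrix (Fin n) (Fin n) ℝ → (Matrix (Fin n) (Fin n) ℝ →L[ℝ] ℝ))
    (D2F : Matrix (Fin n) (Fin n) ℝ →
      (Matrix (Fin n) (Fin n) ℝ →L[ℝ] Matrix (Fin n) (Fin n) ℝ →L[ℝ] ℝ))
    (gradF : Matrix (Fin n) (Fin n) ℝ → Matrix (Fin n) (Fin n) ℝ)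
    -- `F` is twice continuously differentiable on `Sym⁺ₙ`:
    (hDF : ∀ A : Matrix (Fin n) (Fin n) ℝ, A.PosDef →
      HasFDerivWithinAt F (DF A) {B : Matrix (Fin n) (Fin n) ℝ | B.PosDef} A)
    (hD2F : ∀ A : Matrix (Fin n) (Fin n) ℝ, A.PosDef →
      HasFDerivWithinAt DF (D2F A) {B : Matrix (Fin n) (Fin n) ℝ | B.PosDef} A)
    -- `∇F(A)` is the gradient of `F` at `A`, a symmetric matrix with
    -- `DF(A)[η] = tr(∇F(A)·η)` for all symmetric `η`:
    (hgrad : ∀ A : Matrix (Fin n) (Fin n) ℝ, A.PosDef →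
      ∀ η : Matrix (Fin n) (Fin n) ℝ, η.IsSymm → DF A η = (gradF A * η).trace)
    -- `F` is positive:
    (hpos : ∀ A : Matrix (Fin n) (Fin n) ℝ, A.PosDef → 0 < F A)
    -- `F` is inverse concave:
    (hinvconc : ConcaveOn ℝ {B : Matrix (Fin n) (Fin n) ℝ | B.PosDef}
      (fun B => (F B⁻¹)⁻¹)) :
    ∀ A : Matrix (Fin n) (Fin n) ℝ, A.PosDef → ∀ η : Matrix (Fin n) (Fin n) ℝ, η.IsSymm →
      0 ≤ D2F A η η + 2 * (gradF A * η * A⁻¹ * η).trace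
        - (2 / F A) * ((gradF A * η).trace) ^ 2 := by
  intro A hA η hη
  have hηH : η.IsHermitian := isHermitian_iff_isSymm.mpr hη
  have hηAη : (η * A⁻¹ * η).IsSymm := by
    have := isHermitian_conjTranspose_mul_mul η hA.inv.1
    rwa [hηH.eq, isHermitian_iff_isSymm] at this
  have key := two_mul_sq_fderiv_le_of_inverse_concave hDF hD2F hpos hinvconc hA hηH
  rw [hgrad A hA η hη, hgrad A hA _ hηAη, ← Matrix.mul_assoc, ← Matrix.mul_assoc] at key
  have hFA := hpos A hA
  rw [sub_nonneg, div_mul_eq_mul_div, div_le_iff₀ hFA]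
  linarith

/-- for a positive, 1-homogeneous, monotone (positive definite gradient),
inverse concave, twice continuously differentiable curvature function `F` on the cone
of positive definite symmetric matrices, one has
`D²F(A)[η,η] + 2 tr(∇F(A) η A⁻¹ η) - (2 / F(A)) (tr(∇F(A) η))² ≥ 0`
for all symmetric `η`. -/
theorem inverse_concave_inequality (n : ℕ) (F : Matrix (Fin n) (Fin n) ℝ → ℝ)
    (DF : Matrix (Fin n) (Fin n) ℝ → (Matrix (Fin n) (Fin n) ℝ →L[ℝ] ℝ))
    (D2F : Matrix (Fin n) (Fin n) ℝ →
      (Matrix (Fin n) (Fin n) ℝ →L[ℝ] Matrix (Fin n) (Fin n) ℝ →L[ℝ] ℝ))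
    (gradF : Matrix (Fin n) (Fin n) ℝ → Matrix (Fin n) (Fin n) ℝ)
    -- `F` is twice continuously differentiable on `Sym⁺ₙ`:
    (hDF : ∀ A : Matrix (Fin n) (Fin n) ℝ, A.PosDef →
      HasFDerivWithinAt F (DF A) {B : Matrix (Fin n) (Fin n) ℝ | B.PosDef} A)
    (hD2F : ∀ A : Matrix (Fin n) (Fin n) ℝ, A.PosDef →
      HasFDerivWithinAt DF (D2F A) {B : Matrix (Fin n) (Fin n) ℝ | B.PosDef} A)
    (hD2Fcont : ContinuousOn D2F {B : Matrix (Fin n) (Fin n) ℝ | B.PosDef})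
    -- `∇F(A)` is the gradient of `F` at `A`, a symmetric matrix with
    -- `DF(A)[η] = tr(∇F(A)·η)` for all symmetric `η`:
    (hgradsymm : ∀ A : Matrix (Fin n) (Fin n) ℝ, A.PosDef → (gradF A).IsSymm)
    (hgrad : ∀ A : Matrix (Fin n) (Fin n) ℝ, A.PosDef →
      ∀ η : Matrix (Fin n) (Fin n) ℝ, η.IsSymm → DF A η = (gradF A * η).trace)
    -- `F` is positive:
    (hpos : ∀ A : Matrix (Fin n) (Fin n) ℝ, A.PosDef → 0 < F A)
    -- `F` is positively homogeneous of degree 1: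
    (hhom : ∀ A : Matrix (Fin n) (Fin n) ℝ, A.PosDef → ∀ c : ℝ, 0 < c → F (c • A) = c * F A)
    -- `∇F(A)` is positive definite:
    (hmono : ∀ A : Matrix (Fin n) (Fin n) ℝ, A.PosDef → (gradF A).PosDef)
    -- `F` is inverse concave:
    (hinvconc : ConcaveOn ℝ {B : Matrix (Fin n) (Fin n) ℝ | B.PosDef}
      (fun B => (F B⁻¹)⁻¹)) :
    ∀ A : Matrix (Fin n) (Fin n) ℝ, A.PosDef → ∀ η : Matrix (Fin n) (Fin n) ℝ, η.IsSymm →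
      0 ≤ D2F A η η + 2 * (gradF A * η * A⁻¹ * η).trace
        - (2 / F A) * ((gradF A * η).trace) ^ 2 :=
  inverse_concave_inequality_general n F DF D2F gradF hDF hD2F hgrad hpos hinvconc
end
end

section
/- Let 1 ≤ k ≤ n. For every κ ∈ Γ_k and every i ∈ {1,…,n}, the partial derivative of the k-th elementary symmetric polynomial satisfies ∂H_k/∂κ_i(κ) > 0 (i.e., H_k is strictly monotone increasing in each variable on Γ_k). -/
/-!
Write `H_j(κ | i)` for the elementary symmetric polynomials of the coordinates other than `κ_i`.
Since `H_{j+1}(κ) = H_{j+1}(κ | i) + κ_i H_j(κ | i)`, the partial derivative `∂H_k/∂κ_i` is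
`H_{k-1}(κ | i)`, and it suffices to show that `κ ∈ Γ_k` forces `H_j(κ | i) > 0` for `j < k`.
This goes by induction on `j`: if `H_j(κ | i) > 0` but `H_{j+1}(κ | i) ≤ 0`, the positivity of
`H_{j+1}(κ)` and `H_{j+2}(κ)` contradicts Newton's inequality
`H_j H_{j+2} ≤ H_{j+1}^2`, valid for arbitrary real numbers. Newton's inequality in turn holds for
the coefficients of any real-rooted polynomial, because real-rootedness survives differentiation
(Rolle) and reversal of the coefficients, and these reduce it to the discriminant of a quadratic.
-/

noncomputable section

/-- The `k`-th elementary symmetric polynomial `H_k` of `κ ∈ ℝⁿ`. -/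
def esymm (n k : ℕ) (κ : Fin n → ℝ) : ℝ :=
  ∑ s ∈ Finset.powersetCard k (Finset.univ : Finset (Fin n)), ∏ i ∈ s, κ i

/-- The positive cone `Γ₊ ⊆ ℝⁿ`. -/
def GammaPlus (n : ℕ) : Set (Fin n → ℝ) := {κ | ∀ i, 0 < κ i}

/-- The Garding cone `Γ_k = {κ : H_1(κ) > 0, …, H_k(κ) > 0}`. -/
def GammaK (n k : ℕ) : Set (Fin n → ℝ) :=
  {κ | ∀ j : ℕ, 1 ≤ j → j ≤ k → 0 < esymm n j κ}

open Polynomial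

namespace Polynomial

theorem Splits.reverse {K : Type*} [Field K] {p : K[X]} (hp : p.Splits) : p.reverse.Splits := by
  induction hp using Submonoid.closure_induction with
  | mem q hq =>
    refine Splits.of_natDegree_le_one ((reverse_natDegree_le q).trans ?_)
    rcases hq with ⟨a, rfl⟩ | ⟨a, rfl⟩
    · simp
    · exact natDegree_add_le_of_degree_le (by simp) (by simp)
  | one => rw [← C_1, reverse_C]; exact Splits.C 1
  | mul q r _ _ hq hr => rw [reverse_mul_of_domain]; exact hq.mul hr

theorem Splits.reflect {K : Type*} [Field K] {p : K[X]} (hp : p.Splits) {N : ℕ}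
    (hN : p.natDegree ≤ N) : (p.reflect N).Splits := by
  have h := reflect_mul p 1 le_rfl (natDegree_one.trans_le (Nat.zero_le (N - p.natDegree)))
  rw [Nat.add_sub_cancel' hN, mul_one, reflect_one] at h
  rw [h]
  exact hp.reverse.mul (Splits.X_pow _)

theorem Splits.derivative {p : ℝ[X]} (hp : p.Splits) : (derivative p).Splits := by
  rw [splits_iff_card_roots] at hp ⊢
  have := p.card_roots_le_derivative
  have := (Polynomial.derivative p).card_roots'
  have := Polynomial.natDegree_derivative_le p
  omega

/-- Writing `p = ∑ (N choose i) b_i X^i`, this is Newton's inequality `b_i b_{i+2} ≤ b_{i+1}^2`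
with the binomial coefficients cleared. -/
def NewtonIneqAt (p : ℝ[X]) (N i : ℕ) : Prop :=
  ((i : ℝ) + 2) * (N - i) * (p.coeff i * p.coeff (i + 2)) ≤
    ((i : ℝ) + 1) * (N - i - 1) * p.coeff (i + 1) ^ 2

theorem newtonIneqAt_of_derivative {p : ℝ[X]} {N i : ℕ}
    (h : NewtonIneqAt (derivative p) N i) : NewtonIneqAt p (N + 1) (i + 1) := by
  unfold NewtonIneqAt at h ⊢
  simp only [coeff_derivative, add_assoc, Nat.reduceAdd] at h ⊢
  refine le_of_mul_le_mul_left ?_ (by positivity : (0 : ℝ) < (i + 1) * (i + 2))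
  push_cast at h ⊢
  linear_combination h

theorem newtonIneqAt_of_reflect {p : ℝ[X]} {N i : ℕ} (hi : i + 2 ≤ N)
    (h : NewtonIneqAt (p.reflect N) N (N - 2 - i)) : NewtonIneqAt p N i := by
  unfold NewtonIneqAt at h ⊢
  obtain ⟨m, rfl⟩ := Nat.exists_eq_add_of_le hi
  simp only [coeff_reflect, revAt_le (by omega : i + 2 + m - 2 - i ≤ i + 2 + m),
    revAt_le (by omega : i + 2 + m - 2 - i + 1 ≤ i + 2 + m),
    revAt_le (by omega : i + 2 + m - 2 - i + 2 ≤ i + 2 + m)] at h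
  rw [show i + 2 + m - 2 - i = m by omega, show i + 2 + m - m = i + 2 by omega,
    show i + 2 + m - (m + 1) = i + 1 by omega, show i + 2 + m - (m + 2) = i by omega] at h
  push_cast at h ⊢
  linear_combination h

theorem Splits.newtonIneqAt_two_zero {p : ℝ[X]} (hp : p.Splits) (hdeg : p.natDegree ≤ 2) :
    NewtonIneqAt p 2 0 := by
  suffices 4 * (p.coeff 2 * p.coeff 0) ≤ p.coeff 1 ^ 2 by
    unfold NewtonIneqAt; norm_num; linarith
  by_cases h2 : p.coeff 2 = 0
  · simp [h2, sq_nonneg]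
  have hdeg2 : p.natDegree = 2 := le_antisymm hdeg (le_natDegree_of_ne_zero h2)
  obtain ⟨x, hx⟩ := hp.exists_eval_eq_zero (degree_ne_of_natDegree_ne (n := 0) (by omega))
  rw [eval_eq_sum_range, hdeg2] at hx
  simp only [Finset.sum_range_succ, Finset.sum_range_zero] at hx
  have hdisc := discrim_eq_sq_of_quadratic_eq_zero (a := p.coeff 2) (b := p.coeff 1)
    (c := p.coeff 0) (x := x) (by linear_combination hx)
  rw [discrim] at hdisc
  nlinarith [sq_nonneg (2 * p.coeff 2 * x + p.coeff 1)]

theorem Splits.newtonIneqAt {p : ℝ[X]} (hp : p.Splits) {N i : ℕ} (hN : p.natDegree ≤ N)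
    (hi : i + 2 ≤ N) : NewtonIneqAt p N i := by
  induction N generalizing p i with
  | zero => omega
  | succ N ih =>
    have shifted : ∀ {q : ℝ[X]}, q.Splits → q.natDegree ≤ N + 1 → ∀ j, j + 3 ≤ N + 1 →
        NewtonIneqAt q (N + 1) (j + 1) := fun hq hqN j hj =>
      newtonIneqAt_of_derivative <| ih hq.derivative
        ((natDegree_derivative_le _).trans (by omega)) (by omega)
    rcases i with _ | i
    · rcases Nat.lt_or_ge N 2 with hN2 | hN2
      · obtain rfl : N = 1 := by omega
        exact hp.newtonIneqAt_two_zero hN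
      · obtain ⟨j, rfl⟩ := Nat.exists_eq_add_of_le' hN2
        exact newtonIneqAt_of_reflect hi
          (shifted (hp.reflect hN) (natDegree_reflect_le.trans (by omega)) j (by omega))
    · exact shifted hp hN i hi

end Polynomial

namespace Multiset

theorem esymm_cons_succ {R : Type*} [CommSemiring R] (a : R) (s : Multiset R) (j : ℕ) :
    (a ::ₘ s).esymm (j + 1) = s.esymm (j + 1) + a * s.esymm j := by
  simp [esymm, powersetCard_cons, sum_map_mul_left]

theorem esymm_eq_zero_of_card_lt {R : Type*} [CommSemiring R] {s : Multiset R} {j : ℕ}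
    (h : card s < j) : s.esymm j = 0 := by
  simp [esymm, powersetCard_eq_empty _ h]

theorem esymm_mul_esymm_le_sq (s : Multiset ℝ) (j : ℕ) :
    s.esymm j * s.esymm (j + 2) ≤ s.esymm (j + 1) ^ 2 := by
  rcases lt_or_ge (card s) (j + 2) with hs | hs
  · simpa [esymm_eq_zero_of_card_lt hs] using sq_nonneg _
  obtain ⟨c, hc⟩ := Nat.exists_eq_add_of_le hs
  set f := (s.map fun r => X + C r).prod
  have hf : f.Splits := Splits.multisetProd fun q hq => by
    obtain ⟨r, -, rfl⟩ := mem_map.1 hq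
    exact Splits.X_add_C r
  have hdeg : f.natDegree ≤ card s := by
    rw [natDegree_multiset_prod_of_monic _ fun q hq => by
      obtain ⟨r, -, rfl⟩ := mem_map.1 hq
      exact monic_X_add_C r]
    simp
  have h := hf.newtonIneqAt hdeg (i := c) (by omega)
  unfold NewtonIneqAt at h
  rw [prod_X_add_C_coeff s (by omega), prod_X_add_C_coeff s (by omega),
    prod_X_add_C_coeff s (by omega), hc, show j + 2 + c - c = j + 2 by omega,
    show j + 2 + c - (c + 2) = j by omega, show j + 2 + c - (c + 1) = j + 1 by omega] at h
  push_cast at h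
  rcases le_or_gt (s.esymm j * s.esymm (j + 2)) 0 with hneg | hpos
  · exact hneg.trans (sq_nonneg _)
  · have key : ((c : ℝ) + 1) * (j + 1) * (s.esymm j * s.esymm (j + 2)) ≤
        ((c : ℝ) + 1) * (j + 1) * s.esymm (j + 1) ^ 2 := by
      nlinarith [mul_pos (by positivity : (0 : ℝ) < c + j + 3) hpos]
    exact le_of_mul_le_mul_left key (by positivity)

theorem esymm_pos_of_cons {a : ℝ} {s : Multiset ℝ} {k : ℕ}
    (h : ∀ j, 1 ≤ j → j ≤ k → 0 < (a ::ₘ s).esymm j) : ∀ j < k, 0 < s.esymm j := by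
  intro j
  induction j with
  | zero => simp [esymm]
  | succ j ih =>
    intro hj
    have hx := ih (by omega)
    have h1 := h (j + 1) (by omega) (by omega)
    have h2 := h (j + 2) (by omega) (by omega)
    rw [esymm_cons_succ] at h1 h2
    have hN := esymm_mul_esymm_le_sq s j
    by_contra! hy
    nlinarith [mul_nonneg (neg_nonneg.2 hy) h1.le, mul_pos hx h2]

end Multiset

theorem esymm_eq_esymm_cons (n k : ℕ) (κ : Fin n → ℝ) (i : Fin n) :
    esymm n k κ = (κ i ::ₘ (Finset.univ.erase i).val.map κ).esymm k := by
  rw [esymm, ← Finset.esymm_map_val, ← Multiset.map_cons,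
    ← Finset.insert_val_of_notMem (Finset.notMem_erase i _),
    Finset.insert_erase (Finset.mem_univ i)]

theorem fderiv_esymm_apply_single (n k : ℕ) (κ : Fin n → ℝ) (i : Fin n) :
    fderiv ℝ (esymm n (k + 1)) κ (Pi.single i 1) =
      ((Finset.univ.erase i).val.map κ).esymm k := by
  have hd : DifferentiableAt ℝ (esymm n (k + 1)) κ := by
    unfold esymm; fun_prop
  rw [← hd.lineDeriv_eq_fderiv, lineDeriv]
  have hline : (fun t : ℝ => esymm n (k + 1) (κ + t • Pi.single i 1)) =
      fun t => ((Finset.univ.erase i).val.map κ).esymm (k + 1) +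
        (κ i + t) * ((Finset.univ.erase i).val.map κ).esymm k := by
    funext t
    have hrest : (Finset.univ.erase i).val.map (κ + t • Pi.single i 1) =
        (Finset.univ.erase i).val.map κ :=
      Multiset.map_congr rfl fun l hl => by
        simp [Finset.ne_of_mem_erase (Finset.mem_def.2 hl)]
    rw [esymm_eq_esymm_cons _ _ _ i, Multiset.esymm_cons_succ, hrest]
    simp
  rw [hline]
  simp

theorem esymm_strictly_monotone_on_GammaK_general (n k : ℕ) (hk1 : 1 ≤ k)
    (κ : Fin n → ℝ) (hκ : κ ∈ GammaK n k) (i : Fin n) :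
    0 < fderiv ℝ (esymm n k) κ (Pi.single i 1) := by
  obtain ⟨j, rfl⟩ : ∃ j, k = j + 1 := ⟨k - 1, by omega⟩
  rw [fderiv_esymm_apply_single]
  exact Multiset.esymm_pos_of_cons
    (fun l hl1 hl2 => esymm_eq_esymm_cons n l κ i ▸ hκ l hl1 hl2) j (lt_add_one j)

/-- `H_k` is strictly monotone increasing in each variable on `Γ_k`. -/
theorem esymm_strictly_monotone_on_GammaK (n k : ℕ) (hk1 : 1 ≤ k) (hkn : k ≤ n)
    (κ : Fin n → ℝ) (hκ : κ ∈ GammaK n k) (i : Fin n) :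
    0 < fderiv ℝ (esymm n k) κ (Pi.single i 1) :=
  esymm_strictly_monotone_on_GammaK_general n k hk1 κ hκ i
end
end

section
/- Let 1 ≤ s < t ≤ n and let κ ∈ Γ_t. Then for the normalized elementary symmetric functions σ̃_k(κ) := (H_k(κ)/C(n,k))^{1/k} one has σ̃_t(κ) ≤ σ̃_s(κ). In particular, for 1 < s < t < n: σ̃_n ≤ σ̃_t on Γ₊ = Γ_n, σ̃_t ≤ σ̃_s on Γ_t, and σ̃_s ≤ σ̃_1 on Γ_s. -/
noncomputable section

/-!
Write `E_k = H_k / C(n, k)`. Newton's inequalities `E_k E_{k+2} ≤ E_{k+1}²` hold for all real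
`κ`: by Rolle, the derivative of `∏ (X - κᵢ)` has `n - 1` real roots, and these have the same
`E_0, …, E_{n-1}`, so one may assume `n = k + 2`. Then either some `κᵢ = 0` and `E_{k+2} = 0`,
or inverting all `κᵢ` turns `(E_k, E_{k+1}, E_{k+2})` into `∏ κᵢ • (E_2, E_1, E_0)` of the
inverses, and a second descent leaves two numbers, where the inequality is `ab ≤ ((a + b)/2)²`.
On `Γ_t` the numbers `E_0 = 1, E_1, …, E_t` are positive, and for a positive log-concave sequence
with `E_0 = 1` the roots `E_j^{1/j}` decrease.
-/

open Polynomial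

theorem Polynomial.card_roots_derivative_eq_natDegree {p : ℝ[X]}
    (hp : Multiset.card p.roots = p.natDegree) :
    Multiset.card (derivative p).roots = (derivative p).natDegree := by
  have := card_roots' (derivative p)
  have := natDegree_derivative_le p
  have := card_roots_le_derivative p
  omega

theorem Finset.esymm_card_sub_eq_prod_mul_esymm_inv {ι K : Type*} [Field K] [DecidableEq ι]
    (s : Finset ι) (f : ι → K) (hf : ∀ i ∈ s, f i ≠ 0) {j : ℕ} (hj : j ≤ s.card) :
    (s.val.map f).esymm (s.card - j) =
      (∏ i ∈ s, f i) * (s.val.map fun i => (f i)⁻¹).esymm j := by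
  rw [Finset.esymm_map_val, Finset.esymm_map_val, Finset.mul_sum]
  refine Finset.sum_nbij' (s \ ·) (s \ ·) ?_ ?_ ?_ ?_ ?_ <;>
    simp only [Finset.mem_powersetCard] <;> intro u hu
  · exact ⟨Finset.sdiff_subset, by rw [Finset.card_sdiff_of_subset hu.1]; omega⟩
  · exact ⟨Finset.sdiff_subset, by rw [Finset.card_sdiff_of_subset hu.1]; omega⟩
  · exact Finset.sdiff_sdiff_eq_self hu.1
  · exact Finset.sdiff_sdiff_eq_self hu.1
  · have hne : ∏ i ∈ s \ u, f i ≠ 0 :=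
      Finset.prod_ne_zero_iff.mpr fun i hi => hf i (Finset.sdiff_subset hi)
    rw [Finset.prod_inv_distrib, ← Finset.prod_sdiff hu.1, mul_comm (∏ i ∈ s \ u, f i),
      mul_inv_cancel_right₀ hne]

namespace Multiset

theorem esymm_card_sub_eq_prod_mul_esymm_inv {K : Type*} [Field K] (t : Multiset K)
    (h0 : (0 : K) ∉ t) {j : ℕ} (hj : j ≤ card t) :
    t.esymm (card t - j) = t.prod * (t.map (·⁻¹)).esymm j := by
  classical
  have h := Finset.esymm_card_sub_eq_prod_mul_esymm_inv t.toEnumFinset Prod.fst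
    (fun _ hx h => h0 (h ▸ mem_of_mem_toEnumFinset hx)) (j := j) (by simpa using hj)
  have hinv : t.toEnumFinset.val.map (fun x => x.1⁻¹) = t.map (·⁻¹) := by
    conv_rhs => rw [← map_toEnumFinset_fst t, map_map]
    rfl
  rwa [hinv, ← prod_eq_prod_toEnumFinset, map_toEnumFinset_fst, card_toEnumFinset] at h

/-- The witness is the multiset of roots, all real by Rolle, of the derivative of
`∏_{a ∈ s} (X - a)`. -/
theorem exists_card_mul_esymm_eq_sub_mul_esymm (s : Multiset ℝ) (hs : 0 < card s) :
    ∃ v : Multiset ℝ, card v = card s - 1 ∧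
      ∀ j ≤ card s - 1, (card s : ℝ) * v.esymm j = (card s - j) * s.esymm j := by
  set n := card s
  set f : ℝ[X] := (s.map fun a => X - C a).prod
  have hf_deg : f.natDegree = n := natDegree_multiset_prod_X_sub_C_eq_card s
  have hf_roots : f.roots = s := roots_multiset_prod_X_sub_C s
  have hf_split : card f.roots = f.natDegree := by rw [hf_roots, hf_deg]
  have hf_lead : f.leadingCoeff = 1 :=
    (monic_multiset_prod_of_monic _ _ fun a _ => monic_X_sub_C a).leadingCoeff
  have hg_split := card_roots_derivative_eq_natDegree hf_split
  have hg_deg : (derivative f).natDegree = n - 1 := by rw [natDegree_derivative, hf_deg]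
  refine ⟨(derivative f).roots, by rw [hg_split, hg_deg], fun j hj => ?_⟩
  have hg := coeff_eq_esymm_roots_of_card hg_split (k := n - 1 - j) (by omega)
  rw [coeff_derivative, show n - 1 - j + 1 = n - j by omega,
    coeff_eq_esymm_roots_of_card hf_split (by omega), leadingCoeff_derivative, hg_deg, hf_deg,
    hf_lead, hf_roots, show n - (n - j) = j by omega, show n - 1 - (n - 1 - j) = j by omega,
    Nat.cast_sub (by omega), Nat.cast_sub (by omega)] at hg
  have hsign : ((-1 : ℝ) ^ j) ≠ 0 := pow_ne_zero _ (by norm_num)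
  apply mul_left_cancel₀ hsign
  linear_combination -hg

def normalizedEsymm (t : Multiset ℝ) (k : ℕ) : ℝ :=
  t.esymm k / (card t).choose k

variable (t : Multiset ℝ)

theorem normalizedEsymm_zero : t.normalizedEsymm 0 = 1 := by
  simp [normalizedEsymm, esymm]

theorem normalizedEsymm_card : t.normalizedEsymm (card t) = t.prod := by
  simp [normalizedEsymm, esymm, powersetCard_self]

theorem normalizedEsymm_card_sub (h0 : (0 : ℝ) ∉ t) {j : ℕ} (hj : j ≤ card t) :
    t.normalizedEsymm (card t - j) = t.prod * (t.map (·⁻¹)).normalizedEsymm j := by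
  rw [normalizedEsymm, normalizedEsymm, esymm_card_sub_eq_prod_mul_esymm_inv t h0 hj, card_map,
    Nat.choose_symm hj, mul_div_assoc]

theorem normalizedEsymm_two_le_sq (ht : card t = 2) :
    t.normalizedEsymm 2 ≤ t.normalizedEsymm 1 ^ 2 := by
  obtain ⟨a, b, rfl⟩ := card_eq_two.mp ht
  rw [normalizedEsymm, normalizedEsymm, ht, Nat.choose_self, Nat.choose_one_right, insert_eq_cons,
    esymm_pair_one, esymm_pair_two]
  push_cast
  nlinarith [sq_nonneg (a - b)]

theorem exists_card_pred_normalizedEsymm_eq (ht : 0 < card t) :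
    ∃ u : Multiset ℝ, card u = card t - 1 ∧
      ∀ j ≤ card u, u.normalizedEsymm j = t.normalizedEsymm j := by
  obtain ⟨u, hu, hut⟩ := t.exists_card_mul_esymm_eq_sub_mul_esymm ht
  refine ⟨u, hu, fun j hj => ?_⟩
  set n := card t
  have hchoose : ((n - 1).choose j : ℝ) * n = n.choose j * (n - j) := by
    have := Nat.choose_mul_succ_eq (n - 1) j
    rw [Nat.sub_add_cancel ht] at this
    rw [← Nat.cast_sub (by omega : j ≤ n)]
    exact_mod_cast this
  have hnj : (n : ℝ) - j ≠ 0 := by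
    rw [sub_ne_zero]; exact_mod_cast (by omega : n ≠ j)
  rw [normalizedEsymm, normalizedEsymm, hu,
    div_eq_div_iff (by exact_mod_cast (Nat.choose_pos (by omega)).ne')
      (by exact_mod_cast (Nat.choose_pos (by omega)).ne')]
  apply mul_left_cancel₀ hnj
  linear_combination ((n - 1).choose j : ℝ) * hut j (hu ▸ hj) - u.esymm j * hchoose

theorem exists_card_eq_normalizedEsymm_eq {m : ℕ} (hm : m ≤ card t) :
    ∃ u : Multiset ℝ, card u = m ∧
      ∀ j ≤ m, u.normalizedEsymm j = t.normalizedEsymm j := by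
  induction hm using Nat.decreasingInduction with
  | self => exact ⟨t, rfl, fun _ _ => rfl⟩
  | of_succ k hk ih =>
    obtain ⟨u, hu, hut⟩ := ih
    obtain ⟨v, hv, hvu⟩ := u.exists_card_pred_normalizedEsymm_eq (by omega)
    exact ⟨v, by omega, fun j hj => (hvu j (by omega)).trans (hut j (by omega))⟩

theorem normalizedEsymm_mul_le_sq {k : ℕ} (hk : k + 2 ≤ card t) :
    t.normalizedEsymm k * t.normalizedEsymm (k + 2) ≤ t.normalizedEsymm (k + 1) ^ 2 := by
  obtain ⟨u, hu, hut⟩ := t.exists_card_eq_normalizedEsymm_eq hk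
  rw [← hut k (by omega), ← hut (k + 1) (by omega), ← hut (k + 2) le_rfl]
  by_cases h0 : (0 : ℝ) ∈ u
  · rw [← hu, normalizedEsymm_card, prod_eq_zero h0, mul_zero]
    positivity
  obtain ⟨w, hw, hwu⟩ := (u.map (·⁻¹)).exists_card_eq_normalizedEsymm_eq (m := 2)
    (by rw [card_map]; omega)
  have hnewton := w.normalizedEsymm_two_le_sq hw
  rw [hwu 1 (by omega), hwu 2 le_rfl] at hnewton
  have e0 : u.normalizedEsymm (k + 2) = u.prod := by rw [← hu, normalizedEsymm_card]
  have e1 : u.normalizedEsymm (k + 1) = u.prod * (u.map (·⁻¹)).normalizedEsymm 1 := by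
    simpa [hu] using u.normalizedEsymm_card_sub h0 (j := 1) (by omega)
  have e2 : u.normalizedEsymm k = u.prod * (u.map (·⁻¹)).normalizedEsymm 2 := by
    simpa [hu] using u.normalizedEsymm_card_sub h0 (j := 2) (by omega)
  rw [e0, e1, e2]
  nlinarith [mul_le_mul_of_nonneg_left hnewton (sq_nonneg u.prod)]

end Multiset

section LogConcave

variable {p : ℕ → ℝ} {T : ℕ}

theorem pow_succ_le_pow_of_mul_le_sq (h0 : 1 ≤ p 0) (hpos : ∀ j ≤ T, 0 < p j)
    (hp : ∀ j, j + 2 ≤ T → p j * p (j + 2) ≤ p (j + 1) ^ 2) {j : ℕ} (hj : j + 1 ≤ T) :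
    p (j + 1) ^ j ≤ p j ^ (j + 1) := by
  induction j with
  | zero => simpa using h0
  | succ j ih =>
    have hj0 := hpos j (by omega)
    have hj1 := hpos (j + 1) (by omega)
    refine le_of_mul_le_mul_right ?_ (pow_pos hj0 (j + 1))
    calc p (j + 2) ^ (j + 1) * p j ^ (j + 1)
        = (p j * p (j + 2)) ^ (j + 1) := by ring
      _ ≤ (p (j + 1) ^ 2) ^ (j + 1) :=
        pow_le_pow_left₀ (mul_pos hj0 (hpos _ hj)).le (hp j hj) _
      _ = p (j + 1) ^ (j + 2) * p (j + 1) ^ j := by ring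
      _ ≤ p (j + 1) ^ (j + 2) * p j ^ (j + 1) :=
        mul_le_mul_of_nonneg_left (ih (by omega)) (pow_nonneg hj1.le _)

theorem antitoneOn_rpow_one_div_of_mul_le_sq (h0 : 1 ≤ p 0) (hpos : ∀ j ≤ T, 0 < p j)
    (hp : ∀ j, j + 2 ≤ T → p j * p (j + 2) ≤ p (j + 1) ^ 2) :
    AntitoneOn (fun j : ℕ => p j ^ (1 / (j : ℝ))) (Set.Icc 1 T) := by
  refine antitoneOn_of_succ_le Set.ordConnected_Icc fun j _ hj hj' => ?_
  simp only [Set.mem_Icc, Order.succ_eq_add_one] at hj hj' ⊢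
  have hpj := hpos j (by omega)
  have hpj' := hpos (j + 1) hj'.2
  have hx : (p (j + 1) ^ (1 / ((j + 1 : ℕ) : ℝ))) ^ (j * (j + 1)) = p (j + 1) ^ j := by
    rw [pow_mul', one_div, Real.rpow_inv_natCast_pow hpj'.le (by omega)]
  have hy : (p j ^ (1 / (j : ℝ))) ^ (j * (j + 1)) = p j ^ (j + 1) := by
    rw [pow_mul, one_div, Real.rpow_inv_natCast_pow hpj.le (by omega)]
  rw [← pow_le_pow_iff_left₀ (by positivity) (by positivity) (Nat.mul_pos hj.1 j.succ_pos).ne',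
    hx, hy]
  exact pow_succ_le_pow_of_mul_le_sq h0 hpos hp hj'.2

end LogConcave

/-- the normalized elementary symmetric functions
`σ̃_k = (H_k / C(n,k))^{1/k}` are monotone: for `1 ≤ s < t ≤ n` and `κ ∈ Γ_t`,
`σ̃_t(κ) ≤ σ̃_s(κ)`. -/
theorem normalized_esymm_monotone (n s t : ℕ) (hs : 1 ≤ s) (hst : s < t) (htn : t ≤ n)
    (κ : Fin n → ℝ) (hκ : κ ∈ GammaK n t) :
    (esymm n t κ / (n.choose t : ℝ)) ^ (1 / (t : ℝ)) ≤
      (esymm n s κ / (n.choose s : ℝ)) ^ (1 / (s : ℝ)) := by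
  set K := Finset.univ.val.map κ
  have hcard : Multiset.card K = n := by simp [K]
  have hK : ∀ j, K.normalizedEsymm j = esymm n j κ / n.choose j := fun j => by
    rw [Multiset.normalizedEsymm, hcard, Finset.esymm_map_val, esymm]
  have hpos : ∀ j ≤ t, 0 < K.normalizedEsymm j := by
    rintro (_ | j) hj
    · exact K.normalizedEsymm_zero ▸ one_pos
    · rw [hK]
      exact div_pos (hκ _ (by omega) hj) (by exact_mod_cast Nat.choose_pos (by omega))
  have hnewton (j : ℕ) (hj : j + 2 ≤ t) := K.normalizedEsymm_mul_le_sq (k := j) (by omega)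
  have hmono := antitoneOn_rpow_one_div_of_mul_le_sq K.normalizedEsymm_zero.ge hpos hnewton
  simpa only [hK] using hmono ⟨hs, by omega⟩ ⟨by omega, le_rfl⟩ hst.le
end
end

section
/- Let F : Γ₊ → ℝ be twice continuously differentiable, symmetric, strictly monotone, concave, positively homogeneous of degree 1, with F(1,…,1) > 0. Then for all κ ∈ Γ₊: F(κ) ≤ (F(1,…,1)/n)·∑_{i=1}^n κ_i. -/
noncomputable section

/-- a symmetric, strictly monotone, concave, 1-homogeneous `C²`
curvature function `F` on `Γ₊` with `F(1,…,1) > 0` satisfies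
`F(κ) ≤ (F(1,…,1)/n)·∑ κ_i`. -/
theorem concave_curvature_function_le_mean (n : ℕ) (F : (Fin n → ℝ) → ℝ)
    (hreg : ContDiffOn ℝ 2 F (GammaPlus n))
    (hsym : ∀ π : Equiv.Perm (Fin n), ∀ κ ∈ GammaPlus n, F (κ ∘ π) = F κ)
    (hmono : ∀ κ ∈ GammaPlus n, ∀ i : Fin n, 0 < fderiv ℝ F κ (Pi.single i 1))
    (hconc : ConcaveOn ℝ (GammaPlus n) F)
    (hhom : ∀ κ ∈ GammaPlus n, ∀ c : ℝ, 0 < c → F (c • κ) = c * F κ)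
    (hpos : 0 < F (fun _ => 1)) :
    ∀ κ ∈ GammaPlus n, F κ ≤ F (fun _ => 1) / n * ∑ i, κ i := by
  intro κ hκ
  rcases Nat.eq_zero_or_pos n with hn | hn
  · -- n = 0: hhom forces F(𝟙) = 0, contradiction
    exfalso
    have h1 : (fun _ : Fin n => (1:ℝ)) ∈ GammaPlus n := fun i => one_pos
    have := hhom _ h1 2 two_pos
    have h2 : (2:ℝ) • (fun _ : Fin n => (1:ℝ)) = (fun _ => 1) := by
      subst hn; funext i; exact absurd i.2 (by omega)
    rw [h2] at this
    nlinarith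
  -- key: sum over permutations
  have hfib : ∀ j j' : Fin n, ∑ π : Equiv.Perm (Fin n), κ (π j) = ∑ π : Equiv.Perm (Fin n), κ (π j') := by
    intro j j'
    refine Fintype.sum_bijective (fun π => π * Equiv.swap j j')
      (Group.mulRight_bijective _) _ _ ?_
    intro π
    simp [Equiv.Perm.mul_apply, Equiv.swap_apply_left]
  set S := ∑ i, κ i with hS
  have hSpos : 0 < S := Finset.sum_pos (fun i _ => hκ i) (by simpa using Finset.univ_nonempty_iff.2 ⟨⟨0, hn⟩⟩)
  have hcard : (0:ℝ) < (Nat.factorial n : ℝ) := by positivity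
  have htot : ∀ j : Fin n, ∑ π : Equiv.Perm (Fin n), κ (π j) = (Nat.factorial n : ℝ) * S / n := by
    intro j
    have h1 : (n : ℝ) * ∑ π : Equiv.Perm (Fin n), κ (π j)
        = ∑ j' : Fin n, ∑ π : Equiv.Perm (Fin n), κ (π j') := by
      rw [Finset.sum_congr rfl (fun j' _ => (hfib j' j)), Finset.sum_const]
      simp [mul_comm]
    have h2 : ∑ j' : Fin n, ∑ π : Equiv.Perm (Fin n), κ (π j')
        = (Nat.factorial n : ℝ) * S := by
      rw [Finset.sum_comm]
      have : ∀ π : Equiv.Perm (Fin n), ∑ j' : Fin n, κ (π j') = S := by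
        intro π; exact Equiv.sum_comp π κ
      rw [Finset.sum_congr rfl (fun π _ => this π), Finset.sum_const]
      simp [Finset.card_univ, Fintype.card_perm, mul_comm]
    have hn' : (n:ℝ) ≠ 0 := by positivity
    field_simp
    linarith [h1.trans h2]
  -- Jensen over permutations
  set w : Equiv.Perm (Fin n) → ℝ := fun _ => ((Nat.factorial n : ℝ))⁻¹ with hw
  have hw1 : ∑ π : Equiv.Perm (Fin n), w π = 1 := by
    simp [hw, Finset.card_univ, Fintype.card_perm]
    field_simp
  have hmem : ∀ π : Equiv.Perm (Fin n), (κ ∘ π) ∈ GammaPlus n := by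
    intro π i; exact hκ (π i)
  have hjen := hconc.le_map_sum (t := Finset.univ) (w := w) (p := fun π => κ ∘ π)
    (fun π _ => by positivity) hw1 (fun π _ => hmem π)
  have hlhs : ∑ π : Equiv.Perm (Fin n), w π • F (κ ∘ π) = F κ := by
    have : ∀ π : Equiv.Perm (Fin n), F (κ ∘ π) = F κ := fun π => hsym π κ hκ
    simp only [this, smul_eq_mul]
    rw [← Finset.sum_mul, hw1, one_mul]
  have hpt : (∑ π : Equiv.Perm (Fin n), w π • (κ ∘ π)) = (S / n) • (fun _ => (1:ℝ)) := by
    funext j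
    simp only [Finset.sum_apply, Pi.smul_apply, Function.comp_apply, smul_eq_mul]
    rw [← Finset.mul_sum, htot j]
    have hn' : (n:ℝ) ≠ 0 := by positivity
    field_simp
    try ring
  rw [hlhs, hpt] at hjen
  have hSn : 0 < S / n := by positivity
  rw [hhom _ (fun i => one_pos) _ hSn] at hjen
  calc F κ ≤ S / n * F (fun _ => 1) := hjen
    _ = F (fun _ => 1) / n * S := by ring
end
end

section
/- Let F : Γ₊ → ℝ be twice continuously differentiable, symmetric, strictly monotone, concave, positively homogeneous of degree 1, with F(1,…,1) > 0. Then for all κ ∈ Γ₊: ∑_{i=1}^n ∂F/∂κ_i(κ) ≥ F(1,…,1). -/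
/-!
Concavity puts the graph of `F` below its tangent plane at `κ`, so
`F(1,…,1) ≤ F κ + DF(κ)((1,…,1) - κ)`, and Euler's identity `DF(κ) κ = F κ` for
1-homogeneous `F` cancels the `F κ`, leaving `DF(κ)(1,…,1) = ∑ᵢ ∂F/∂κᵢ(κ)`.
-/

noncomputable section

section

variable {E G : Type*} [NormedAddCommGroup E] [NormedSpace ℝ E]
  [NormedAddCommGroup G] [NormedSpace ℝ G]

theorem ConcaveOn.le_add_fderiv {s : Set E} {f : E → ℝ} {f' : E →L[ℝ] ℝ} {x y : E}
    (hf : ConcaveOn ℝ s f) (hx : x ∈ s) (hy : y ∈ s) (hd : HasFDerivAt f f' x) :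
    f y ≤ f x + f' (y - x) := by
  set ℓ : ℝ →ᵃ[ℝ] E := AffineMap.lineMap x y
  have hℓ0 : ℓ 0 = x := AffineMap.lineMap_apply_zero x y
  have hℓ1 : ℓ 1 = y := AffineMap.lineMap_apply_one x y
  have hderiv : HasDerivAt (f ∘ ℓ) (f' (y - x)) 0 := by
    refine HasFDerivAt.comp_hasDerivAt (0 : ℝ) ?_ AffineMap.hasDerivAt_lineMap
    rwa [hℓ0]
  have hslope := (hf.comp_affineMap ℓ).slope_le_of_hasDerivAt
    (by simpa [hℓ0]) (by simpa [hℓ1]) one_pos hderiv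
  rw [slope_def_field, Function.comp_apply, Function.comp_apply, hℓ0, hℓ1] at hslope
  linarith

theorem HasFDerivAt.apply_self_eq_of_pos_homogeneous {f : E → G} {f' : E →L[ℝ] G} {x : E}
    (hd : HasFDerivAt f f' x) (hhom : ∀ c : ℝ, 0 < c → f (c • x) = c • f x) :
    f' x = f x := by
  have hscale : HasDerivAt (fun c : ℝ => c • x) x 1 := by
    simpa using (hasDerivAt_id (1 : ℝ)).smul_const x
  have hray : HasDerivAt (fun c : ℝ => f (c • x)) (f' x) 1 :=
    HasFDerivAt.comp_hasDerivAt (1 : ℝ) (by simpa using hd) hscale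
  have hlin : (fun c : ℝ => f (c • x)) =ᶠ[nhds 1] fun c => c • f x :=
    Filter.eventually_of_mem (Ioi_mem_nhds one_pos) fun c hc => hhom c hc
  simpa using (hray.congr_of_eventuallyEq hlin.symm).unique
    ((hasDerivAt_id (1 : ℝ)).smul_const (f x))

end

theorem isOpen_gammaPlus (n : ℕ) : IsOpen (GammaPlus n) := by
  simpa [GammaPlus, Set.pi] using
    isOpen_set_pi (Set.finite_univ (α := Fin n)) fun _ _ => isOpen_Ioi (a := (0 : ℝ))

theorem concave_curvature_function_deriv_sum_general (n : ℕ) (F : (Fin n → ℝ) → ℝ)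
    (hreg : ContDiffOn ℝ 2 F (GammaPlus n))
    (hconc : ConcaveOn ℝ (GammaPlus n) F)
    (hhom : ∀ κ ∈ GammaPlus n, ∀ c : ℝ, 0 < c → F (c • κ) = c * F κ) :
    ∀ κ ∈ GammaPlus n, F (fun _ => 1) ≤ ∑ i, fderiv ℝ F κ (Pi.single i 1) := by
  intro κ hκ
  have hd : HasFDerivAt F (fderiv ℝ F κ) κ :=
    ((hreg.contDiffAt ((isOpen_gammaPlus n).mem_nhds hκ)).differentiableAt
      two_ne_zero).hasFDerivAt
  have hone : (fun _ => (1 : ℝ)) ∈ GammaPlus n := fun _ => one_pos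
  calc F (fun _ => 1)
      ≤ F κ + fderiv ℝ F κ ((fun _ => 1) - κ) := hconc.le_add_fderiv hκ hone hd
    _ = fderiv ℝ F κ (fun _ => 1) := by
      rw [map_sub, hd.apply_self_eq_of_pos_homogeneous (hhom κ hκ)]
      ring
    _ = ∑ i, fderiv ℝ F κ (Pi.single i 1) := by
      rw [← map_sum]
      exact congrArg _ (LinearMap.sum_single_apply _ _).symm

/-- a symmetric, strictly monotone, concave, 1-homogeneous `C²`
curvature function `F` on `Γ₊` with `F(1,…,1) > 0` satisfies
`∑ᵢ ∂F/∂κᵢ(κ) ≥ F(1,…,1)`. -/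
theorem concave_curvature_function_deriv_sum (n : ℕ) (F : (Fin n → ℝ) → ℝ)
    (hreg : ContDiffOn ℝ 2 F (GammaPlus n))
    (hsym : ∀ π : Equiv.Perm (Fin n), ∀ κ ∈ GammaPlus n, F (κ ∘ π) = F κ)
    (hmono : ∀ κ ∈ GammaPlus n, ∀ i : Fin n, 0 < fderiv ℝ F κ (Pi.single i 1))
    (hconc : ConcaveOn ℝ (GammaPlus n) F)
    (hhom : ∀ κ ∈ GammaPlus n, ∀ c : ℝ, 0 < c → F (c • κ) = c * F κ)
    (hpos : 0 < F (fun _ => 1)) :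
    ∀ κ ∈ GammaPlus n, F (fun _ => 1) ≤ ∑ i, fderiv ℝ F κ (Pi.single i 1) :=
  concave_curvature_function_deriv_sum_general n F hreg hconc hhom
end
end

section
/- Let N ≥ 1, R > 0, and let (K_m)_{m∈ℕ} be a sequence of compact convex subsets of ℝ^N with nonempty interior such that K_m ⊆ interior(K_{m+1}) for all m, and suppose K := closure(⋃_m K_m) is bounded. Assume that for every m and every boundary point x ∈ ∂K_m there exists y ∈ ℝ^N such that the open ball B_R(y) is contained in interior(K_m) and ‖x − y‖ = R. Then for every boundary point x ∈ ∂K there exists y ∈ ℝ^N such that B_R(y) ⊆ interior(K) and ‖x − y‖ = R; in particular K satisfies a uniform interior sphere condition. -/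
noncomputable section

/-- an increasing exhaustion by compact convex bodies, each satisfying a
uniform interior sphere condition of radius `R`, has a bounded limit body satisfying the
same uniform interior sphere condition. -/
theorem uniform_interior_sphere_condition_limit (N : ℕ) (hN : 1 ≤ N) (R : ℝ) (hR : 0 < R)
    (K : ℕ → Set (EuclideanSpace ℝ (Fin N)))
    (hcpt : ∀ m : ℕ, IsCompact (K m)) (hconv : ∀ m : ℕ, Convex ℝ (K m))
    (hint : ∀ m : ℕ, (interior (K m)).Nonempty)
    (hmono : ∀ m : ℕ, K m ⊆ interior (K (m + 1)))
    (hbd : Bornology.IsBounded (closure (⋃ m, K m)))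
    (hisc : ∀ m : ℕ, ∀ x ∈ frontier (K m), ∃ y : EuclideanSpace ℝ (Fin N),
      Metric.ball y R ⊆ interior (K m) ∧ ‖x - y‖ = R) :
    ∀ x ∈ frontier (closure (⋃ m, K m)), ∃ y : EuclideanSpace ℝ (Fin N),
      Metric.ball y R ⊆ interior (closure (⋃ m, K m)) ∧ ‖x - y‖ = R := by
  intro x hx
  set C := closure (⋃ m, K m) with hCdef
  have hKsub : ∀ m, K m ⊆ C := fun m => (Set.subset_iUnion K m).trans subset_closure
  have hKmono : Monotone K := monotone_nat_of_le_succ fun m => (hmono m).trans interior_subset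
  have hxniC : x ∉ interior C := hx.2
  have hxC : x ∈ C := by
    have := hx.1
    rwa [closure_closure] at this
  have hxnK : ∀ m, x ∉ K m := fun m hxm =>
    hxniC (interior_mono (hKsub (m + 1)) (hmono m hxm))
  have hKne : ∀ m, (K m).Nonempty := fun m => ⟨(hint m).some, interior_subset (hint m).some_mem⟩
  -- key: for each m get boundary closest point z and sphere center y
  have key : ∀ m, ∃ z y : EuclideanSpace ℝ (Fin N),
      Metric.infDist x (K m) = dist x z ∧ Metric.ball y R ⊆ interior (K m) ∧ ‖z - y‖ = R := by
    intro m
    obtain ⟨z, hzK, hzd⟩ := (hcpt m).exists_infDist_eq_dist (hKne m) x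
    have hdpos : 0 < dist x z := dist_pos.2 fun h => hxnK m (h ▸ hzK)
    have hzfr : z ∈ frontier (K m) := by
      refine ⟨subset_closure hzK, fun hzint => ?_⟩
      obtain ⟨ε, hε, hball⟩ := Metric.isOpen_iff.1 isOpen_interior z hzint
      set d := dist x z with hd
      set t : ℝ := min (ε / (2 * d)) 1 with ht
      have ht0 : 0 < t := lt_min (by positivity) one_pos
      have ht1 : t ≤ 1 := min_le_right _ _
      set p := z + t • (x - z) with hp
      have hpz : dist p z = t * d := by
        rw [dist_eq_norm, hd, dist_eq_norm]
        simp [hp, norm_smul, Real.norm_eq_abs, abs_of_pos ht0]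
      have hpK : p ∈ K m := by
        apply interior_subset (hball _)
        rw [Metric.mem_ball, hpz]
        have h1 : t ≤ ε / (2 * d) := min_le_left _ _
        have : t * d ≤ ε / 2 := by
          rw [le_div_iff₀ (by positivity : (0:ℝ) < 2 * d)] at h1
          nlinarith
        linarith
      have hxp : dist x p = (1 - t) * d := by
        have hxp' : x - p = (1 - t) • (x - z) := by
          rw [hp]; module
        rw [dist_eq_norm, hxp', norm_smul, Real.norm_eq_abs, abs_of_nonneg (by linarith : (0:ℝ) ≤ 1 - t), hd, dist_eq_norm]
      have hle : Metric.infDist x (K m) ≤ dist x p := Metric.infDist_le_dist_of_mem hpK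
      rw [hzd, hxp] at hle
      nlinarith [mul_pos ht0 hdpos]
    obtain ⟨y, hy1, hy2⟩ := hisc m z hzfr
    exact ⟨z, y, hzd, hy1, hy2⟩
  choose z y hzd hyball hzy using key
  -- z m → x
  have hinf0 : Filter.Tendsto (fun m => Metric.infDist x (K m)) Filter.atTop (nhds 0) := by
    rw [Metric.tendsto_atTop]
    intro ε hε
    obtain ⟨p, hp, hdp⟩ := Metric.mem_closure_iff.1 hxC ε hε
    obtain ⟨m0, hpm0⟩ := Set.mem_iUnion.1 hp
    refine ⟨m0, fun m hm => ?_⟩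
    have h1 : Metric.infDist x (K m) ≤ dist x p :=
      Metric.infDist_le_dist_of_mem (hKmono hm hpm0)
    have h0 : 0 ≤ Metric.infDist x (K m) := Metric.infDist_nonneg
    rw [Real.dist_eq, sub_zero, abs_of_nonneg h0]
    linarith
  have hzx : Filter.Tendsto z Filter.atTop (nhds x) := by
    rw [tendsto_iff_dist_tendsto_zero]
    simp_rw [dist_comm]
    simpa [← hzd] using hinf0
  -- y m ∈ C, C compact
  have hyC : ∀ m, y m ∈ C := fun m =>
    hKsub m (interior_subset (hyball m (Metric.mem_ball_self hR)))
  have hCcpt : IsCompact C := hbd.isCompact_closure.of_isClosed_subset isClosed_closure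
      (by rw [closure_closure])
  obtain ⟨ylim, hylimC, φ, hφ, hyconv⟩ := hCcpt.tendsto_subseq hyC
  refine ⟨ylim, ?_, ?_⟩
  · intro w hw
    have hwlt : dist w ylim < R := hw
    have hdconv : Filter.Tendsto (fun k => dist w (y (φ k))) Filter.atTop (nhds (dist w ylim)) :=
      (Filter.Tendsto.dist tendsto_const_nhds hyconv)
    have hev : ∀ᶠ k in Filter.atTop, dist w (y (φ k)) < R :=
      hdconv.eventually (gt_mem_nhds hwlt)
    obtain ⟨k, hk⟩ := hev.exists
    exact interior_mono (hKsub (φ k)) (hyball (φ k) hk)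
  · have h1 : Filter.Tendsto (fun k => ‖z (φ k) - y (φ k)‖) Filter.atTop (nhds ‖x - ylim‖) :=
      ((hzx.comp hφ.tendsto_atTop).sub hyconv).norm
    have h2 : Filter.Tendsto (fun k => ‖z (φ k) - y (φ k)‖) Filter.atTop (nhds R) := by
      simp only [hzy]; exact tendsto_const_nhds
    exact tendsto_nhds_unique h1 h2
end
end
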